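/- arXiv:2008.00584 — 5 statements merged into one kernel-verified Lean document; each statement's English description precedes it below -/
import Mathlib

section
/- Let k ≥ 1 be an integer and let γ > −1 be real. Then Γ(k+1)/Γ(k+γ) ≤ k^{1−γ}/Γ(1+γ) if 0 ≤ γ < 1, and Γ(k+1)/Γ(k+γ) ≤ k^{1−γ} if −1 < γ < 0 or γ ≥ 1. -/
open Real

lemma gamma_log_aux {x γ : ℝ} (hx : 0 < x) (hxγ : 0 < x + γ) (hγ : -1 < γ)
    (h : γ < 0 ∨ 1 < γ) :
    Real.Gamma (x + 1) ≤ x ^ (1 - γ) * Real.Gamma (x + γ) := by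
  have hC := Real.convexOn_log_Gamma
  have hx1 : (0:ℝ) < x + 1 := by linarith
  have hGx : 0 < Real.Gamma x := Real.Gamma_pos_of_pos hx
  have hGx1 : 0 < Real.Gamma (x + 1) := Real.Gamma_pos_of_pos hx1
  have hGxγ : 0 < Real.Gamma (x + γ) := Real.Gamma_pos_of_pos hxγ
  have hrec : Real.log (Real.Gamma x) = Real.log (Real.Gamma (x+1)) - Real.log x := by
    rw [Real.Gamma_add_one hx.ne', Real.log_mul hx.ne' hGx.ne']
    ring
  have key : Real.log (Real.Gamma (x+1)) ≤ (1 - γ) * Real.log x + Real.log (Real.Gamma (x+γ)) := by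
    rcases h with h | h
    · -- γ < 0 : x = a(x+γ) + b(x+1), a = 1/(1-γ), b = -γ/(1-γ)
      have h1γ : (0:ℝ) < 1 - γ := by linarith
      have hc := hC.2 (Set.mem_Ioi.2 hxγ) (Set.mem_Ioi.2 hx1)
        (le_of_lt (by positivity : (0:ℝ) < 1 / (1-γ)))
        (le_of_lt (by apply div_pos <;> linarith : (0:ℝ) < -γ / (1-γ)))
        (by field_simp; ring)
      have hpt : (1/(1-γ)) • (x+γ) + (-γ/(1-γ)) • (x+1) = x := by
        simp only [smul_eq_mul]
        rw [div_mul_eq_mul_div, div_mul_eq_mul_div, ← add_div, div_eq_iff h1γ.ne']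
        ring
      rw [hpt] at hc
      simp only [Function.comp_apply, smul_eq_mul] at hc
      rw [hrec] at hc
      have := mul_le_mul_of_nonneg_left hc h1γ.le
      rw [mul_sub, mul_add] at this
      have e1 : (1-γ) * ((1/(1-γ)) * Real.log (Real.Gamma (x+γ))) =
          Real.log (Real.Gamma (x+γ)) := by field_simp
      have e2 : (1-γ) * ((-γ/(1-γ)) * Real.log (Real.Gamma (x+1))) =
          -γ * Real.log (Real.Gamma (x+1)) := by field_simp
      rw [e1, e2] at this
      nlinarith [this]
    · -- γ > 1 : x+1 = a x + b (x+γ), a = 1-1/γ, b = 1/γ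
      have hγ0 : (0:ℝ) < γ := by linarith
      have hc := hC.2 (Set.mem_Ioi.2 hx) (Set.mem_Ioi.2 hxγ)
        (le_of_lt (by apply div_pos <;> linarith : (0:ℝ) < (γ-1)/γ))
        (le_of_lt (by positivity : (0:ℝ) < 1/γ))
        (by field_simp; ring)
      have hpt : ((γ-1)/γ) • x + (1/γ) • (x+γ) = x + 1 := by
        simp only [smul_eq_mul]
        rw [div_mul_eq_mul_div, div_mul_eq_mul_div, ← add_div, div_eq_iff hγ0.ne']
        ring
      rw [hpt] at hc
      simp only [Function.comp_apply, smul_eq_mul] at hc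
      rw [hrec] at hc
      have := mul_le_mul_of_nonneg_left hc hγ0.le
      have e1 : γ * (((γ-1)/γ) * (Real.log (Real.Gamma (x+1)) - Real.log x)) =
          (γ-1) * (Real.log (Real.Gamma (x+1)) - Real.log x) := by field_simp
      have e2 : γ * ((1/γ) * Real.log (Real.Gamma (x+γ))) =
          Real.log (Real.Gamma (x+γ)) := by field_simp
      rw [mul_add, e1, e2] at this
      nlinarith [this]
  calc Real.Gamma (x+1) = Real.exp (Real.log (Real.Gamma (x+1))) := (Real.exp_log hGx1).symm
    _ ≤ Real.exp ((1-γ) * Real.log x + Real.log (Real.Gamma (x+γ))) := Real.exp_le_exp.2 key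
    _ = x ^ (1-γ) * Real.Gamma (x+γ) := by
        rw [Real.exp_add, Real.exp_log hGxγ, Real.rpow_def_of_pos hx]
        ring_nf

lemma gamma_ind_aux {γ : ℝ} (h0 : 0 ≤ γ) (h1 : γ < 1) (k : ℕ) (hk : 1 ≤ k) :
    Real.Gamma (1 + γ) * Real.Gamma ((k:ℝ) + 1) ≤ (k:ℝ) ^ (1 - γ) * Real.Gamma ((k:ℝ) + γ) := by
  induction k with
  | zero => omega
  | succ n ih =>
    rcases Nat.eq_or_lt_of_le hk with h | h
    · -- base case n+1 = 1
      have : n = 0 := by omega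
      subst this
      push_cast
      rw [show ((1:ℝ) + 1) = 2 by norm_num, Real.Gamma_two, Real.one_rpow]
      norm_num
    · have hn : 1 ≤ n := by omega
      have ihn := ih hn
      have hn0 : (0:ℝ) < n := by exact_mod_cast hn
      have hn1 : (0:ℝ) < (n:ℝ) + 1 := by linarith
      have hnγ : (0:ℝ) < (n:ℝ) + γ := by linarith
      push_cast
      have hrec1 : Real.Gamma ((n:ℝ) + 1 + 1) = ((n:ℝ)+1) * Real.Gamma ((n:ℝ)+1) :=
        Real.Gamma_add_one hn1.ne'
      have hrec2 : Real.Gamma ((n:ℝ) + 1 + γ) = ((n:ℝ)+γ) * Real.Gamma ((n:ℝ)+γ) := by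
        rw [show (n:ℝ) + 1 + γ = ((n:ℝ)+γ) + 1 by ring]
        exact Real.Gamma_add_one hnγ.ne'
      rw [hrec1, hrec2]
      -- AM-GM: n^(1-γ) * (n+1)^γ ≤ n + γ
      have hamgm : (n:ℝ) ^ (1-γ) * ((n:ℝ)+1) ^ γ ≤ (1-γ) * n + γ * ((n:ℝ)+1) :=
        Real.geom_mean_le_arith_mean2_weighted (by linarith) h0 hn0.le hn1.le (by ring)
      have hGnγ : 0 < Real.Gamma ((n:ℝ)+γ) := Real.Gamma_pos_of_pos hnγ
      have step : (n:ℝ) ^ (1-γ) * ((n:ℝ)+1) ≤ ((n:ℝ)+1) ^ (1-γ) * ((n:ℝ)+γ) := by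
        have h1 : ((n:ℝ)+1) = ((n:ℝ)+1)^(1-γ) * ((n:ℝ)+1)^γ := by
          rw [← Real.rpow_add hn1]; norm_num
        calc (n:ℝ) ^ (1-γ) * ((n:ℝ)+1) = ((n:ℝ)+1)^(1-γ) * ((n:ℝ)^(1-γ) * ((n:ℝ)+1)^γ) := by
              nth_rewrite 1 [h1]; ring
          _ ≤ ((n:ℝ)+1)^(1-γ) * ((1-γ)*n + γ*((n:ℝ)+1)) := by
              apply mul_le_mul_of_nonneg_left hamgm (Real.rpow_nonneg hn1.le _)
          _ = ((n:ℝ)+1) ^ (1-γ) * ((n:ℝ)+γ) := by ring_nf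
      calc Real.Gamma (1+γ) * (((n:ℝ)+1) * Real.Gamma ((n:ℝ)+1))
          = (Real.Gamma (1+γ) * Real.Gamma ((n:ℝ)+1)) * ((n:ℝ)+1) := by ring
        _ ≤ ((n:ℝ)^(1-γ) * Real.Gamma ((n:ℝ)+γ)) * ((n:ℝ)+1) := by
            apply mul_le_mul_of_nonneg_right ihn (by linarith)
        _ = ((n:ℝ)^(1-γ) * ((n:ℝ)+1)) * Real.Gamma ((n:ℝ)+γ) := by ring
        _ ≤ (((n:ℝ)+1)^(1-γ) * ((n:ℝ)+γ)) * Real.Gamma ((n:ℝ)+γ) := by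
            apply mul_le_mul_of_nonneg_right step hGnγ.le
        _ = ((n:ℝ)+1)^(1-γ) * (((n:ℝ)+γ) * Real.Gamma ((n:ℝ)+γ)) := by ring


/-- **Lemma 2.1, (2.6).** For an integer `k ≥ 1` and real `γ > −1`:
`Γ(k+1)/Γ(k+γ) ≤ k^{1−γ}/Γ(1+γ)` if `0 ≤ γ < 1`, and
`Γ(k+1)/Γ(k+γ) ≤ k^{1−γ}` if `−1 < γ < 0` or `γ ≥ 1`. -/
theorem gamma_ratio_upper (k : ℕ) (hk : 1 ≤ k) (γ : ℝ) (hγ : -1 < γ) :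
    (0 ≤ γ ∧ γ < 1 →
      Real.Gamma ((k : ℝ) + 1) / Real.Gamma ((k : ℝ) + γ) ≤
        (k : ℝ) ^ (1 - γ) / Real.Gamma (1 + γ)) ∧
    ((-1 < γ ∧ γ < 0) ∨ 1 ≤ γ →
      Real.Gamma ((k : ℝ) + 1) / Real.Gamma ((k : ℝ) + γ) ≤ (k : ℝ) ^ (1 - γ)) := by
  have hk0 : (0:ℝ) < k := by exact_mod_cast hk
  have hkγ : (0:ℝ) < (k:ℝ) + γ := by
    have : (1:ℝ) ≤ k := by exact_mod_cast hk
    linarith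
  have hGkγ : 0 < Real.Gamma ((k:ℝ) + γ) := Real.Gamma_pos_of_pos hkγ
  constructor
  · rintro ⟨h0, h1⟩
    have hG1γ : 0 < Real.Gamma (1 + γ) := Real.Gamma_pos_of_pos (by linarith)
    have := gamma_ind_aux h0 h1 k hk
    rw [div_le_div_iff₀ hGkγ hG1γ]
    nlinarith [this]
  · rintro (⟨h1, h2⟩ | h1)
    · have := gamma_log_aux hk0 hkγ hγ (Or.inl h2)
      rw [div_le_iff₀ hGkγ]
      linarith
    · rcases eq_or_lt_of_le h1 with h | h
      · subst h
        simp [div_self hGkγ.ne']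
      · have := gamma_log_aux hk0 hkγ hγ (Or.inr h)
        rw [div_le_iff₀ hGkγ]
        linarith
end

section
/- Let k ≥ 1 be an integer and let γ > −1 be real. Then Γ(k+γ)/Γ(k+1) ≤ k^{γ−1} if 0 ≤ γ < 1, and Γ(k+γ)/Γ(k+1) ≤ Γ(1+γ)·k^{γ−1} if −1 < γ < 0 or γ ≥ 1. -/
open Real

/-- Bernoulli's inequality for exponents outside (0,1), for positive s. -/
lemma bern_aux {γ s : ℝ} (hs : 0 < s) (hγ : -1 < γ) (hγ' : γ < 0 ∨ 1 ≤ γ) :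
    1 + γ * s ≤ (1 + s) ^ γ := by
  rcases hγ' with hγ' | hγ'
  · have hs1 : (0:ℝ) < 1 + s := by linarith
    have hA : (0:ℝ) < (1 + s) ^ γ := rpow_pos_of_pos hs1 γ
    have h1 : (1 + s) ^ (-γ) ≤ 1 + (-γ) * s :=
      (rpow_one_add_lt_one_add_mul_self (by linarith) hs.ne' (by linarith) (by linarith)).le
    rw [rpow_neg hs1.le] at h1
    have hgs : 0 < 1 - γ * s := by nlinarith
    have h2 : 1 ≤ (1 - γ * s) * ((1 + s) ^ γ) := by
      have h := mul_le_mul_of_nonneg_right h1 hA.le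
      rw [inv_mul_cancel₀ hA.ne'] at h
      nlinarith [h]
    have h4 : (1 - γ * s) * (1 + γ * s) ≤ (1 - γ * s) * ((1 + s) ^ γ) := by
      nlinarith [sq_nonneg (γ * s)]
    exact le_of_mul_le_mul_left h4 hgs
  · exact one_add_mul_self_le_rpow_one_add (by linarith) hγ'

/-- Key step inequality: `(x+γ) x^{γ-1} ≤ (x+1)^γ` for γ outside (0,1). -/
lemma key_aux {γ : ℝ} (hγ : -1 < γ) (hγ' : γ < 0 ∨ 1 ≤ γ) {x : ℝ} (hx : 0 < x) :
    (x + γ) * x ^ (γ - 1) ≤ (x + 1) ^ γ := by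
  have hB := bern_aux (s := 1 / x) (by positivity) hγ hγ'
  have hx1 : (0:ℝ) < x + 1 := by linarith
  rw [show (1:ℝ) + 1 / x = (x + 1) / x by field_simp, div_rpow hx1.le hx.le] at hB
  have hxγ : (0:ℝ) < x ^ γ := rpow_pos_of_pos hx γ
  have h2 := mul_le_mul_of_nonneg_right hB hxγ.le
  rw [div_mul_cancel₀ _ hxγ.ne'] at h2
  calc (x + γ) * x ^ (γ - 1) = (1 + γ * (1 / x)) * x ^ γ := by
        rw [rpow_sub hx, rpow_one]; field_simp
    _ ≤ (x + 1) ^ γ := h2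

/-- Part 2 by induction. -/
lemma part2_aux {γ : ℝ} (hγ : -1 < γ) (hγ' : γ < 0 ∨ 1 ≤ γ) :
    ∀ k : ℕ, 1 ≤ k →
      Real.Gamma ((k : ℝ) + γ) / Real.Gamma ((k : ℝ) + 1) ≤
        Real.Gamma (1 + γ) * (k : ℝ) ^ (γ - 1) := by
  have h1γ : (0:ℝ) < 1 + γ := by linarith
  have hΓ1γ : 0 < Real.Gamma (1 + γ) := Gamma_pos_of_pos h1γ
  intro k hk
  induction k, hk using Nat.le_induction with
  | base =>
    push_cast
    rw [show (1:ℝ) + 1 = 2 by norm_num, Real.Gamma_two, one_rpow, div_one, mul_one]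
  | succ k hk IH =>
    have hkR : (1:ℝ) ≤ (k:ℝ) := by exact_mod_cast hk
    have hk0 : (0:ℝ) < (k:ℝ) := by linarith
    have hkγ : (0:ℝ) < (k:ℝ) + γ := by linarith
    have hΓk1 : 0 < Real.Gamma ((k:ℝ) + 1) := Gamma_pos_of_pos (by linarith)
    push_cast
    have e1 : Real.Gamma ((k:ℝ) + 1 + γ) = ((k:ℝ) + γ) * Real.Gamma ((k:ℝ) + γ) := by
      rw [show (k:ℝ) + 1 + γ = ((k:ℝ) + γ) + 1 by ring, Real.Gamma_add_one hkγ.ne']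
    have e2 : Real.Gamma ((k:ℝ) + 1 + 1) = ((k:ℝ) + 1) * Real.Gamma ((k:ℝ) + 1) := by
      rw [Real.Gamma_add_one (by linarith : (k:ℝ) + 1 ≠ 0)]
    rw [e1, e2]
    have key := key_aux hγ hγ' hk0
    have hk1 : (0:ℝ) < (k:ℝ) + 1 := by linarith
    have hΓγ : 0 ≤ Real.Gamma ((k:ℝ) + γ) := (Gamma_pos_of_pos hkγ).le
    calc ((k:ℝ) + γ) * Real.Gamma ((k:ℝ) + γ) / (((k:ℝ) + 1) * Real.Gamma ((k:ℝ) + 1))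
        = (((k:ℝ) + γ) / ((k:ℝ) + 1)) * (Real.Gamma ((k:ℝ) + γ) / Real.Gamma ((k:ℝ) + 1)) := mul_div_mul_comm _ _ _ _
      _ ≤ (((k:ℝ) + γ) / ((k:ℝ) + 1)) * (Real.Gamma (1 + γ) * (k:ℝ) ^ (γ - 1)) := by
          apply mul_le_mul_of_nonneg_left IH (by positivity)
      _ = Real.Gamma (1 + γ) * ((((k:ℝ) + γ) * (k:ℝ) ^ (γ - 1)) / ((k:ℝ) + 1)) := by ring
      _ ≤ Real.Gamma (1 + γ) * ((k:ℝ) + 1) ^ (γ - 1) := by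
          apply mul_le_mul_of_nonneg_left _ hΓ1γ.le
          rw [rpow_sub hk1, rpow_one]
          gcongr

/-- **Lemma 2.1, (2.7).** For an integer `k ≥ 1` and real `γ > −1`:
`Γ(k+γ)/Γ(k+1) ≤ k^{γ−1}` if `0 ≤ γ < 1`, and
`Γ(k+γ)/Γ(k+1) ≤ Γ(1+γ)·k^{γ−1}` if `−1 < γ < 0` or `γ ≥ 1`. -/
theorem gamma_ratio_upper' (k : ℕ) (hk : 1 ≤ k) (γ : ℝ) (hγ : -1 < γ) :
    (0 ≤ γ ∧ γ < 1 →
      Real.Gamma ((k : ℝ) + γ) / Real.Gamma ((k : ℝ) + 1) ≤ (k : ℝ) ^ (γ - 1)) ∧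
    ((-1 < γ ∧ γ < 0) ∨ 1 ≤ γ →
      Real.Gamma ((k : ℝ) + γ) / Real.Gamma ((k : ℝ) + 1) ≤
        Real.Gamma (1 + γ) * (k : ℝ) ^ (γ - 1)) := by
  have hk0 : (0:ℝ) < (k:ℝ) := by exact_mod_cast hk.trans' (le_refl 1) |>.trans_lt' Nat.zero_lt_one
  constructor
  · rintro ⟨h0, h1⟩
    have hΓk1 : 0 < Real.Gamma ((k:ℝ) + 1) := Gamma_pos_of_pos (by linarith)
    have eΓ : Real.Gamma ((k:ℝ) + 1) = (k:ℝ) * Real.Gamma (k:ℝ) := Real.Gamma_add_one hk0.ne'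
    rcases eq_or_lt_of_le h0 with rfl | h0'
    · have hΓ : 0 < Real.Gamma (k:ℝ) := Gamma_pos_of_pos hk0
      rw [add_zero, eΓ, zero_sub, rpow_neg_one, mul_comm, ← div_div, div_self hΓ.ne', one_div]
    · have h := Real.Gamma_mul_add_mul_le_rpow_Gamma_mul_rpow_Gamma hk0
        (by linarith : (0:ℝ) < (k:ℝ) + 1) (by linarith : 0 < 1 - γ) h0' (by ring)
      rw [show (1 - γ) * (k:ℝ) + γ * ((k:ℝ) + 1) = (k:ℝ) + γ by ring] at h
      have eΓ2 : Real.Gamma (k:ℝ) = Real.Gamma ((k:ℝ) + 1) / (k:ℝ) := by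
        rw [eΓ]; field_simp
      rw [eΓ2, div_rpow hΓk1.le hk0.le] at h
      have hrw : Real.Gamma ((k:ℝ) + 1) ^ (1 - γ) / (k:ℝ) ^ (1 - γ) *
          Real.Gamma ((k:ℝ) + 1) ^ γ = Real.Gamma ((k:ℝ) + 1) * (k:ℝ) ^ (γ - 1) := by
        rw [show γ - 1 = -(1 - γ) by ring, rpow_neg hk0.le, div_mul_eq_mul_div,
          ← rpow_add hΓk1, show 1 - γ + γ = 1 by ring, rpow_one, div_eq_mul_inv]
      rw [hrw] at h
      rw [div_le_iff₀ hΓk1]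
      linarith [h, mul_comm (Real.Gamma ((k:ℝ) + 1)) ((k:ℝ) ^ (γ - 1))]
  · rintro (⟨_, h⟩ | h)
    · exact part2_aux hγ (Or.inl h) k hk
    · exact part2_aux hγ (Or.inr h) k hk
end

section
/- Let k ≥ 0 be an integer, let λ > 0, and let z be a complex number with |z| < 1. Then |₂F₁(k+1, 1−λ; k+λ+1; z)| ≤ (1−|z|)^{λ−1} if 0 < λ ≤ 1, and |₂F₁(k+1, 1−λ; k+λ+1; z)| ≤ (1+|z|)^{λ−1} if λ > 1. -/
open Real

/-- Pochhammer symbol for complex `a`. -/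
noncomputable def pochC (a : ℂ) (j : ℕ) : ℂ := ∏ i ∈ Finset.range j, (a + i)

/-- Gauss hypergeometric function `₂F₁(a,b;c;z)` for complex arguments, as a `tsum`. -/
noncomputable def hyp2F1 (a b c z : ℂ) : ℂ :=
  ∑' j : ℕ, pochC a j * pochC b j / (pochC c j * (Nat.factorial j : ℂ)) * z ^ j

open Filter MeasureTheory



lemma pochC_zero' (a : ℂ) : pochC a 0 = 1 := rfl

lemma pochC_succ (a : ℂ) (j : ℕ) : pochC a (j + 1) = pochC a j * (a + j) :=
  Finset.prod_range_succ _ _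

lemma norm_pochC_le (a : ℂ) (c : ℝ) (hc : ‖a‖ ≤ c) (j : ℕ) :
    ‖pochC a j‖ ≤ ∏ i ∈ Finset.range j, (c + i) := by
  unfold pochC
  refine le_trans (Finset.norm_prod_le (Finset.range j) (fun i : ℕ => a + (i:ℂ))) (Finset.prod_le_prod (fun i _ => norm_nonneg _) ?_)
  intro i _
  calc ‖a + (i:ℂ)‖ ≤ ‖a‖ + ‖(i:ℂ)‖ := norm_add_le _ _
    _ ≤ c + i := by
        simp only [Complex.norm_natCast]
        linarith

lemma pos_prod (c : ℝ) (hc : 0 < c) (j : ℕ) : 0 < ∏ i ∈ Finset.range j, (c + i) :=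
  Finset.prod_pos (fun i _ => by positivity)

/-- master summability lemma -/
lemma summable_aux {c r : ℝ} (hc : 0 < c) (hr0 : 0 ≤ r) (hr : r < 1) :
    Summable (fun j : ℕ => (∏ i ∈ Finset.range j, (c + i)) * r ^ j / (j.factorial : ℝ)) := by
  rcases eq_or_lt_of_le hr0 with h0 | hrpos
  · apply summable_of_ne_finset_zero (s := {0})
    intro j hj
    have hj1 : 1 ≤ j := Nat.one_le_iff_ne_zero.2 (by simpa using hj)
    rw [← h0, zero_pow (by omega)]
    simp
  · apply summable_of_ratio_test_tendsto_lt_one hr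
    · filter_upwards with j
      have := pos_prod c hc j
      have : (∏ i ∈ Finset.range j, (c + i)) * r ^ j / (j.factorial : ℝ) > 0 := by positivity
      exact ne_of_gt this
    · have key : ∀ j : ℕ, ‖(∏ i ∈ Finset.range (j+1), (c + i)) * r ^ (j+1) / ((j+1).factorial : ℝ)‖ /
          ‖(∏ i ∈ Finset.range j, (c + i)) * r ^ j / (j.factorial : ℝ)‖ = (c + j) * r / (j + 1) := by
        intro j
        have h1 := pos_prod c hc j
        have h2 : (0:ℝ) < r ^ j := pow_pos hrpos j
        have h3 : (0:ℝ) < (j.factorial : ℝ) := by positivity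
        rw [Finset.prod_range_succ, Nat.factorial_succ]
        rw [Real.norm_of_nonneg (by positivity), Real.norm_of_nonneg (by positivity)]
        field_simp
        push_cast; ring
      simp_rw [key]
      have : Tendsto (fun j : ℕ => (c + j) * r / (j + 1)) atTop (nhds r) := by
        have h1 : (fun j : ℕ => (c + j) * r / (j + 1)) =
            (fun j : ℕ => ((c - 1) / (j + 1)) * r + r) := by
          funext j
          have : (j:ℝ) + 1 ≠ 0 := by positivity
          field_simp
          ring
        rw [h1]
        have h2 : Tendsto (fun j : ℕ => 1 / ((j:ℝ) + 1)) atTop (nhds 0) :=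
          tendsto_one_div_add_atTop_nhds_zero_nat
        have h3 : Tendsto (fun j : ℕ => ((c-1) / ((j:ℝ) + 1)) * r + r) atTop (nhds (0 * r + r)) := by
          apply Tendsto.add_const
          apply Tendsto.mul_const
          simpa [div_eq_mul_inv] using h2.const_mul (c-1)
        simpa using h3
      exact this

lemma summable_aux2 {c r : ℝ} (hc : 0 < c) (hr0 : 0 ≤ r) (hr : r < 1) :
    Summable (fun j : ℕ =>
      (∏ i ∈ Finset.range j, (c + i)) * ((j : ℝ) * r ^ (j - 1)) / (j.factorial : ℝ)) := by
  rw [← summable_nat_add_iff 1]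
  have heq : (fun j : ℕ =>
      (∏ i ∈ Finset.range (j+1), (c + i)) * (((j+1 : ℕ) : ℝ) * r ^ (j + 1 - 1)) /
        ((j+1).factorial : ℝ)) =
      fun j : ℕ => c * ((∏ i ∈ Finset.range j, ((c+1) + i)) * r ^ j / (j.factorial : ℝ)) := by
    funext j
    have h1 : ∏ i ∈ Finset.range (j+1), (c + i) = c * ∏ i ∈ Finset.range j, ((c+1) + i) := by
      rw [Finset.prod_range_succ']
      have : ∀ i ∈ Finset.range j, (c + ((i+1 : ℕ) : ℝ)) = ((c+1) + i) := by
        intro i _; push_cast; ring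
      rw [Finset.prod_congr rfl this]
      push_cast; ring
    have h2 : ((j+1).factorial : ℝ) = ((j+1 : ℕ) : ℝ) * (j.factorial : ℝ) := by
      rw [Nat.factorial_succ]; push_cast; ring
    have h3 : ((j+1 : ℕ) : ℝ) ≠ 0 := by positivity
    have h4 : (j.factorial : ℝ) ≠ 0 := by positivity
    rw [h1, h2]
    simp only [Nat.add_sub_cancel]
    field_simp
  rw [heq]
  exact (summable_aux (by linarith) hr0 hr).mul_left c

lemma summable_g_norm (a : ℂ) {z : ℂ} (hz : ‖z‖ < 1) :
    Summable (fun j : ℕ => ‖pochC a j / (j.factorial : ℂ) * z ^ j‖) := by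
  refine Summable.of_nonneg_of_le (fun _ => norm_nonneg _) (fun j => ?_)
    (summable_aux (c := ‖a‖ + 1) (by positivity) (norm_nonneg z) hz)
  have h4 : (0:ℝ) < (j.factorial : ℝ) := by positivity
  rw [norm_mul, norm_div, norm_pow, Complex.norm_natCast]
  calc ‖pochC a j‖ / (j.factorial : ℝ) * ‖z‖ ^ j
      = ‖pochC a j‖ * ‖z‖ ^ j / (j.factorial : ℝ) := by ring
    _ ≤ (∏ i ∈ Finset.range j, ((‖a‖+1) + i)) * ‖z‖ ^ j / (j.factorial : ℝ) := by
        gcongr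
        exact norm_pochC_le a (‖a‖+1) (by linarith) j

lemma summable_g (a : ℂ) {z : ℂ} (hz : ‖z‖ < 1) :
    Summable (fun j : ℕ => pochC a j / (j.factorial : ℂ) * z ^ j) :=
  (summable_g_norm a hz).of_norm

lemma summable_g' (a : ℂ) {z : ℂ} {r : ℝ} (hzr : ‖z‖ ≤ r) (hr : r < 1) :
    Summable (fun j : ℕ => pochC a j / (j.factorial : ℂ) * ((j : ℂ) * z ^ (j - 1))) := by
  apply Summable.of_norm_bounded
    (summable_aux2 (c := ‖a‖ + 1) (by positivity) ((norm_nonneg z).trans hzr) hr)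
  intro j
  rw [norm_mul, norm_div, norm_mul, norm_pow, Complex.norm_natCast, Complex.norm_natCast]
  have h4 : (0:ℝ) < (j.factorial : ℝ) := by positivity
  have hp := norm_pochC_le a (‖a‖+1) (by linarith) j
  have hzp : ‖z‖ ^ (j-1) ≤ r ^ (j-1) := pow_le_pow_left₀ (norm_nonneg z) hzr _
  calc ‖pochC a j‖ / (j.factorial : ℝ) * ((j:ℝ) * ‖z‖ ^ (j-1))
      = ‖pochC a j‖ * ((j:ℝ) * ‖z‖ ^ (j-1)) / (j.factorial : ℝ) := by ring
    _ ≤ (∏ i ∈ Finset.range j, ((‖a‖+1) + i)) * ((j:ℝ) * r ^ (j-1)) / (j.factorial : ℝ) := by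
        gcongr

noncomputable def binG (a : ℂ) (z : ℂ) : ℂ := ∑' j : ℕ, pochC a j / (j.factorial : ℂ) * z ^ j

lemma binG_hasDerivAt (a : ℂ) {z : ℂ} (hz : ‖z‖ < 1) :
    HasDerivAt (binG a)
      (∑' j : ℕ, pochC a j / (j.factorial : ℂ) * ((j : ℂ) * z ^ (j - 1))) z := by
  set r : ℝ := (‖z‖ + 1) / 2 with hrdef
  have hzr : ‖z‖ < r := by rw [hrdef]; linarith
  have hr1 : r < 1 := by rw [hrdef]; linarith
  have hr0 : 0 ≤ r := le_of_lt (lt_of_le_of_lt (norm_nonneg z) hzr)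
  apply hasDerivAt_tsum_of_isPreconnected
    (u := fun j : ℕ =>
      (∏ i ∈ Finset.range j, ((‖a‖+1) + i)) * ((j : ℝ) * r ^ (j - 1)) / (j.factorial : ℝ))
    (summable_aux2 (by positivity) hr0 hr1) (Metric.isOpen_ball)
    ((convex_ball (0:ℂ) r).isPreconnected)
    (g := fun j z => pochC a j / (j.factorial : ℂ) * z ^ j)
    (g' := fun j z => pochC a j / (j.factorial : ℂ) * ((j : ℂ) * z ^ (j - 1)))
    (y₀ := 0)
  · intro j y _
    exact (hasDerivAt_pow j y).const_mul _
  · intro j y hy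
    rw [Metric.mem_ball, dist_zero_right] at hy
    rw [norm_mul, norm_div, norm_mul, norm_pow, Complex.norm_natCast, Complex.norm_natCast]
    have h4 : (0:ℝ) < (j.factorial : ℝ) := by positivity
    have hp := norm_pochC_le a (‖a‖+1) (by linarith) j
    have hzp : ‖y‖ ^ (j-1) ≤ r ^ (j-1) := pow_le_pow_left₀ (norm_nonneg y) hy.le _
    calc ‖pochC a j‖ / (j.factorial : ℝ) * ((j:ℝ) * ‖y‖ ^ (j-1))
        = ‖pochC a j‖ * ((j:ℝ) * ‖y‖ ^ (j-1)) / (j.factorial : ℝ) := by ring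
      _ ≤ (∏ i ∈ Finset.range j, ((‖a‖+1) + i)) * ((j:ℝ) * r ^ (j-1)) / (j.factorial : ℝ) := by
          gcongr
  · exact Metric.mem_ball_self (by positivity)
  · exact summable_g a (by simp)
  · rw [Metric.mem_ball, dist_zero_right]; exact hzr


lemma summable_e (a : ℂ) {z : ℂ} (hz : ‖z‖ < 1) :
    Summable (fun j : ℕ => pochC a (j+1) / (j.factorial : ℂ) * z ^ j) := by
  have hs := (summable_aux (c := ‖a‖ + 2) (by positivity) (norm_nonneg z) hz).mul_left (‖a‖+1)
  apply Summable.of_norm_bounded hs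
  intro j
  rw [norm_mul, norm_div, norm_pow, Complex.norm_natCast]
  have h4 : (0:ℝ) < (j.factorial : ℝ) := by positivity
  have hp := norm_pochC_le a (‖a‖+1) (by linarith) (j+1)
  have h1 : ∏ i ∈ Finset.range (j+1), ((‖a‖+1) + i)
      = (‖a‖+1) * ∏ i ∈ Finset.range j, ((‖a‖+2) + i) := by
    rw [Finset.prod_range_succ']
    have : ∀ i ∈ Finset.range j, ((‖a‖+1) + ((i+1 : ℕ) : ℝ)) = ((‖a‖+2) + i) := by
      intro i _; push_cast; ring
    rw [Finset.prod_congr rfl this]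
    push_cast; ring
  rw [h1] at hp
  calc ‖pochC a (j+1)‖ / (j.factorial : ℝ) * ‖z‖ ^ j
      = ‖pochC a (j+1)‖ * ‖z‖ ^ j / (j.factorial : ℝ) := by ring
    _ ≤ ((‖a‖+1) * ∏ i ∈ Finset.range j, ((‖a‖+2) + i)) * ‖z‖ ^ j / (j.factorial : ℝ) := by
        gcongr
    _ = (‖a‖+1) * ((∏ i ∈ Finset.range j, ((‖a‖+2) + i)) * ‖z‖ ^ j / (j.factorial : ℝ)) := by
        ring

lemma binG_ode (a : ℂ) {z : ℂ} (hz : ‖z‖ < 1) :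
    (1 - z) * (∑' j : ℕ, pochC a j / (j.factorial : ℂ) * ((j : ℂ) * z ^ (j - 1)))
      = a * binG a z := by
  have hg : Summable (fun j : ℕ => pochC a j / (j.factorial : ℂ) * z ^ j) := summable_g a hz
  have hg' : Summable (fun j : ℕ => pochC a j / (j.factorial : ℂ) * ((j : ℂ) * z ^ (j - 1))) :=
    summable_g' a le_rfl hz
  have he : Summable (fun j : ℕ => pochC a (j+1) / (j.factorial : ℂ) * z ^ j) := summable_e a hz
  have hterm : ∀ j : ℕ, pochC a (j+1) / (j.factorial : ℂ) * z ^ j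
      = a * (pochC a j / (j.factorial : ℂ) * z ^ j)
        + z * (pochC a j / (j.factorial : ℂ) * ((j : ℂ) * z ^ (j - 1))) := by
    intro j
    cases j with
    | zero => simp [pochC_succ, pochC_zero']
    | succ n =>
      have hfac : ((n+1).factorial : ℂ) ≠ 0 := Nat.cast_ne_zero.2 (Nat.factorial_ne_zero _)
      rw [pochC_succ]
      have : z * (pochC a (n+1) / ((n+1).factorial : ℂ) * (((n+1 : ℕ) : ℂ) * z ^ (n + 1 - 1)))
          = pochC a (n+1) / ((n+1).factorial : ℂ) * (((n+1 : ℕ) : ℂ) * z ^ (n+1)) := by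
        simp only [Nat.add_sub_cancel]
        ring
      rw [this]
      push_cast
      ring
  have hS : (∑' j : ℕ, pochC a (j+1) / (j.factorial : ℂ) * z ^ j)
      = a * binG a z
        + z * (∑' j : ℕ, pochC a j / (j.factorial : ℂ) * ((j : ℂ) * z ^ (j - 1))) := by
    rw [show (fun j : ℕ => pochC a (j+1) / (j.factorial : ℂ) * z ^ j)
        = fun j : ℕ => a * (pochC a j / (j.factorial : ℂ) * z ^ j)
          + z * (pochC a j / (j.factorial : ℂ) * ((j : ℂ) * z ^ (j - 1))) from funext hterm]
    rw [Summable.tsum_add (hg.mul_left a) (hg'.mul_left z), tsum_mul_left, tsum_mul_left]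
    rfl
  have hshift : (∑' j : ℕ, pochC a j / (j.factorial : ℂ) * ((j : ℂ) * z ^ (j - 1)))
      = ∑' j : ℕ, pochC a (j+1) / (j.factorial : ℂ) * z ^ j := by
    rw [Summable.tsum_eq_zero_add hg']
    simp only [Nat.cast_zero, zero_mul, mul_zero, zero_add, pochC_zero']
    apply tsum_congr
    intro j
    have hfac2 : ((j).factorial : ℂ) ≠ 0 := Nat.cast_ne_zero.2 (Nat.factorial_ne_zero _)
    have hj1 : ((j:ℂ) + 1) ≠ 0 := by
      have := Nat.cast_add_one_ne_zero (R := ℂ) j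
      exact_mod_cast this
    simp only [Nat.add_sub_cancel]
    rw [Nat.factorial_succ]
    push_cast
    field_simp
  have hkey := hshift.trans hS
  linear_combination hkey

lemma one_sub_ne_zero_of_norm_lt_one {z : ℂ} (hz : ‖z‖ < 1) : (1 - z : ℂ) ≠ 0 := by
  intro h
  have : z = 1 := by linear_combination -h
  rw [this] at hz
  simp at hz

lemma one_sub_mem_slitPlane {z : ℂ} (hz : ‖z‖ < 1) : (1 - z : ℂ) ∈ Complex.slitPlane := by
  rw [Complex.mem_slitPlane_iff]
  left
  have : z.re ≤ ‖z‖ := by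
    calc z.re ≤ |z.re| := le_abs_self _
      _ ≤ ‖z‖ := Complex.abs_re_le_norm z
      _ = ‖z‖ := rfl
  simp only [Complex.sub_re, Complex.one_re]
  linarith

theorem binG_eq (a : ℂ) {w : ℂ} (hw : ‖w‖ < 1) : binG a w = (1 - w) ^ (-a) := by
  have key : ∀ z ∈ Metric.ball (0:ℂ) 1, HasDerivAt (fun y => binG a y * (1 - y) ^ a) 0 z := by
    intro z hzball
    rw [Metric.mem_ball, dist_zero_right] at hzball
    have hb0 := one_sub_ne_zero_of_norm_lt_one hzball
    have hG := binG_hasDerivAt a hzball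
    have hsub : HasDerivAt (fun y : ℂ => 1 - y) (-1) z := by
      exact (hasDerivAt_id z).const_sub (1:ℂ)
    have hφ : HasDerivAt (fun y : ℂ => (1 - y) ^ a) (a * (1 - z) ^ (a - 1) * (-1)) z :=
      HasDerivAt.cpow_const hsub (one_sub_mem_slitPlane hzball)
    have hmul := hG.mul hφ
    have hzero : (∑' j : ℕ, pochC a j / (j.factorial : ℂ) * ((j : ℂ) * z ^ (j - 1)))
          * (1 - z) ^ a + binG a z * (a * (1 - z) ^ (a - 1) * (-1)) = 0 := by
      have hsplit : ((1 - z) ^ a : ℂ) = (1 - z) ^ (a - 1) * (1 - z) := by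
        have := Complex.cpow_add (a - 1) 1 hb0
        rw [sub_add_cancel] at this
        rw [this, Complex.cpow_one]
      rw [hsplit]
      linear_combination ((1 - z) ^ (a - 1)) * (binG_ode a hzball)
    rw [hzero] at hmul
    exact hmul
  have hdiff : DifferentiableOn ℂ (fun y => binG a y * (1 - y) ^ a) (Metric.ball (0:ℂ) 1) :=
    fun z hzb => ((key z hzb).differentiableAt).differentiableWithinAt
  have hfd : ∀ z ∈ Metric.ball (0:ℂ) 1,
      fderivWithin ℂ (fun y => binG a y * (1 - y) ^ a) (Metric.ball (0:ℂ) 1) z = 0 := by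
    intro z hzb
    rw [fderivWithin_of_isOpen Metric.isOpen_ball hzb, (key z hzb).hasFDerivAt.fderiv]
    ext v
    simp
  have hw1 : w ∈ Metric.ball (0:ℂ) 1 := by rwa [Metric.mem_ball, dist_zero_right]
  have h01 : (0:ℂ) ∈ Metric.ball (0:ℂ) 1 := Metric.mem_ball_self one_pos
  have hconst := (convex_ball (0:ℂ) 1).is_const_of_fderivWithin_eq_zero hdiff hfd hw1 h01
  have hbin0 : binG a 0 = 1 := by
    unfold binG
    rw [tsum_eq_single 0]
    · simp [pochC_zero']
    · intro j hj
      rcases Nat.exists_eq_succ_of_ne_zero hj with ⟨n, rfl⟩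
      simp
  rw [hbin0, one_mul] at hconst
  simp only [sub_zero, Complex.one_cpow] at hconst
  have hb0 := one_sub_ne_zero_of_norm_lt_one hw
  have hpowne : ((1 - w) ^ a : ℂ) ≠ 0 := by
    rw [Ne, Complex.cpow_eq_zero_iff]
    tauto
  rw [Complex.cpow_neg]
  exact eq_inv_of_mul_eq_one_left hconst

lemma pochC_ne_zero {a : ℂ} (ha : 0 < a.re) (j : ℕ) : pochC a j ≠ 0 := by
  unfold pochC
  rw [Finset.prod_ne_zero_iff]
  intro i _ h0
  have h := congrArg Complex.re h0
  simp only [Complex.add_re, Complex.natCast_re, Complex.zero_re] at h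
  have : (0:ℝ) ≤ (i:ℝ) := Nat.cast_nonneg i
  linarith

lemma poch_fact (k : ℕ) : ∀ j : ℕ,
    pochC ((k:ℂ)+1) j * (k.factorial : ℂ) = (((k+j).factorial : ℕ) : ℂ)
  | 0 => by simp [pochC_zero']
  | (n+1) => by
    rw [pochC_succ]
    have h1 : k + (n+1) = (k+n) + 1 := by ring
    rw [h1, Nat.factorial_succ]
    push_cast
    linear_combination ((k:ℂ) + n + 1) * poch_fact k n

lemma poch_split (a : ℂ) (m j : ℕ) : pochC a (m + j) = pochC a m * pochC (a + m) j := by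
  unfold pochC
  rw [Finset.prod_range_add]
  congr 1
  apply Finset.prod_congr rfl
  intro i _
  push_cast
  ring

lemma pochC_real (r : ℝ) (m : ℕ) :
    pochC ((r:ℝ):ℂ) m = ((∏ i ∈ Finset.range m, (r + i) : ℝ) : ℂ) := by
  unfold pochC
  push_cast
  rfl

/-- the beta integral with natural first argument -/
lemma beta_nat (lam : ℝ) (hlam : 0 < lam) (n : ℕ) :
    Complex.betaIntegral ((n:ℂ)+1) (lam:ℂ) = ((n.factorial : ℕ) : ℂ) / pochC (lam:ℂ) (n+1) := by
  rw [Complex.betaIntegral_symm]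
  have := Complex.betaIntegral_eval_nat_add_one_right (u := (lam:ℂ)) (by simpa using hlam) n
  rw [this]
  rfl

section Main

variable {k : ℕ} {lam : ℝ} {z : ℂ}

/-- integrability of the basic beta-type integrand -/
lemma beta_integrable (hlam : 0 < lam) (m : ℕ) :
    MeasureTheory.IntegrableOn
      (fun x : ℝ => (x:ℂ)^m * (1 - (x:ℂ))^((lam:ℂ)-1)) (Set.Ioc (0:ℝ) 1) := by
  have h := Complex.betaIntegral_convergent (u := ((m:ℕ):ℂ)+1) (v := (lam:ℂ))
    (by simp; positivity) (by simpa using hlam)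
  rw [intervalIntegrable_iff_integrableOn_Ioc_of_le zero_le_one] at h
  have heq : ∀ x : ℝ, (x:ℂ)^(((m:ℕ):ℂ)+1-1) * (1 - (x:ℂ))^((lam:ℂ)-1)
      = (x:ℂ)^m * (1 - (x:ℂ))^((lam:ℂ)-1) := by
    intro x
    rw [add_sub_cancel_right, Complex.cpow_natCast]
  simpa only [heq] using h

/-- value of the basic beta-type integral -/
lemma beta_value (hlam : 0 < lam) (m : ℕ) :
    ∫ x in Set.Ioc (0:ℝ) 1, (x:ℂ)^m * (1 - (x:ℂ))^((lam:ℂ)-1)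
      = ((m.factorial : ℕ) : ℂ) / pochC (lam:ℂ) (m+1) := by
  rw [← beta_nat lam hlam m, Complex.betaIntegral,
    intervalIntegral.integral_of_le zero_le_one]
  apply MeasureTheory.setIntegral_congr_fun measurableSet_Ioc
  intro x _
  simp only [add_sub_cancel_right, Complex.cpow_natCast]

lemma coeff_eq (hlam : 0 < lam) (k j : ℕ) :
    pochC ((k:ℂ)+1) j * pochC (1-(lam:ℂ)) j / (pochC ((k:ℂ)+(lam:ℂ)+1) j * (j.factorial : ℂ))
      * (((k.factorial:ℕ):ℂ) / pochC (lam:ℂ) (k+1))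
    = pochC (1-(lam:ℂ)) j / (j.factorial : ℂ)
      * ((((k+j).factorial:ℕ):ℂ) / pochC (lam:ℂ) (k+j+1)) := by
  have h1 : pochC (lam:ℂ) (k+j+1) = pochC (lam:ℂ) (k+1) * pochC ((k:ℂ)+(lam:ℂ)+1) j := by
    rw [show k+j+1 = (k+1)+j from by ring, poch_split]
    congr 1
    unfold pochC
    apply Finset.prod_congr rfl
    intro i _
    push_cast
    ring
  have h2 := poch_fact k j
  have hC : pochC ((k:ℂ)+(lam:ℂ)+1) j ≠ 0 := by
    apply pochC_ne_zero
    simp only [Complex.add_re, Complex.one_re, Complex.natCast_re, Complex.ofReal_re]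
    positivity
  have hP : pochC (lam:ℂ) (k+1) ≠ 0 := by
    apply pochC_ne_zero
    simpa using hlam
  have hf : (j.factorial : ℂ) ≠ 0 := Nat.cast_ne_zero.2 (Nat.factorial_ne_zero _)
  rw [h1, ← h2]
  field_simp

/-- Euler integral representation (times the beta normalization) -/
lemma hyp_repr (hlam : 0 < lam) (hz : ‖z‖ < 1) (k : ℕ) :
    hyp2F1 ((k:ℂ)+1) (1-(lam:ℂ)) ((k:ℂ)+(lam:ℂ)+1) z
        * (((k.factorial:ℕ):ℂ) / pochC (lam:ℂ) (k+1))
    = ∫ x in Set.Ioc (0:ℝ) 1,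
        (x:ℂ)^k * (1 - (x:ℂ))^((lam:ℂ)-1) * (1 - (x:ℂ)*z)^((lam:ℂ)-1) := by
  set b1 : ℂ := 1 - (lam:ℂ) with hb1
  set F : ℕ → ℝ → ℂ := fun j x =>
    pochC b1 j / (j.factorial : ℂ) * z ^ j * ((x:ℂ)^(k+j) * (1 - (x:ℂ))^((lam:ℂ)-1)) with hF
  have hFint : ∀ j, MeasureTheory.IntegrableOn (F j) (Set.Ioc (0:ℝ) 1) := fun j =>
    (beta_integrable hlam (k+j)).const_mul _
  -- value of each term integral
  have hFval : ∀ j, ∫ x in Set.Ioc (0:ℝ) 1, F j x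
      = pochC b1 j / (j.factorial : ℂ) * z ^ j
        * ((((k+j).factorial:ℕ):ℂ) / pochC (lam:ℂ) (k+j+1)) := by
    intro j
    rw [hF]
    simp only
    rw [MeasureTheory.integral_const_mul, beta_value hlam (k+j)]
  -- summability of integrals of norms
  have hnormsum : Summable (fun j => ∫ x in Set.Ioc (0:ℝ) 1, ‖F j x‖) := by
    have hWint : MeasureTheory.IntegrableOn
        (fun x : ℝ => ‖(1 - (x:ℂ))^((lam:ℂ)-1)‖) (Set.Ioc (0:ℝ) 1) := by
      have := (beta_integrable hlam 0).norm
      simpa [MeasureTheory.IntegrableOn] using this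
    set C : ℝ := ∫ x in Set.Ioc (0:ℝ) 1, ‖(1 - (x:ℂ))^((lam:ℂ)-1)‖ with hC
    refine Summable.of_nonneg_of_le
      (fun j => MeasureTheory.integral_nonneg (fun x => norm_nonneg _))
      (fun j => ?_) ((summable_g_norm b1 hz).mul_right C)
    have hb : ∀ x ∈ Set.Ioc (0:ℝ) 1, ‖F j x‖
        ≤ ‖pochC b1 j / (j.factorial : ℂ) * z ^ j‖ * ‖(1 - (x:ℂ))^((lam:ℂ)-1)‖ := by
      intro x hx
      have hxk : ‖(x:ℂ) ^ (k+j)‖ ≤ 1 := by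
        rw [norm_pow]
        apply pow_le_one₀ (norm_nonneg _)
        rw [Complex.norm_real, Real.norm_eq_abs, abs_of_pos hx.1]
        exact hx.2
      have h2 : ‖(x:ℂ)^(k+j)‖ * ‖(1 - (x:ℂ))^((lam:ℂ)-1)‖ ≤ ‖(1 - (x:ℂ))^((lam:ℂ)-1)‖ :=
        mul_le_of_le_one_left (norm_nonneg _) hxk
      rw [hF]
      calc ‖pochC b1 j / (j.factorial : ℂ) * z ^ j * ((x:ℂ)^(k+j) * (1 - (x:ℂ))^((lam:ℂ)-1))‖
          = ‖pochC b1 j / (j.factorial : ℂ) * z ^ j‖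
              * (‖(x:ℂ)^(k+j)‖ * ‖(1 - (x:ℂ))^((lam:ℂ)-1)‖) := by
            simp [norm_mul]
        _ ≤ ‖pochC b1 j / (j.factorial : ℂ) * z ^ j‖ * ‖(1 - (x:ℂ))^((lam:ℂ)-1)‖ :=
            mul_le_mul_of_nonneg_left h2 (norm_nonneg _)
    calc ∫ x in Set.Ioc (0:ℝ) 1, ‖F j x‖
        ≤ ∫ x in Set.Ioc (0:ℝ) 1,
            ‖pochC b1 j / (j.factorial : ℂ) * z ^ j‖ * ‖(1 - (x:ℂ))^((lam:ℂ)-1)‖ :=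
          MeasureTheory.setIntegral_mono_on ((hFint j).norm)
            (hWint.const_mul _) measurableSet_Ioc hb
      _ = ‖pochC b1 j / (j.factorial : ℂ) * z ^ j‖ * C := by
          rw [MeasureTheory.integral_const_mul]
  -- swap sum and integral
  have hswap := MeasureTheory.integral_tsum_of_summable_integral_norm
    (μ := MeasureTheory.volume.restrict (Set.Ioc (0:ℝ) 1)) hFint hnormsum
  -- identify LHS
  have hLHS : hyp2F1 ((k:ℂ)+1) b1 ((k:ℂ)+(lam:ℂ)+1) z
      * (((k.factorial:ℕ):ℂ) / pochC (lam:ℂ) (k+1))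
      = ∑' j, ∫ x in Set.Ioc (0:ℝ) 1, F j x := by
    unfold hyp2F1
    rw [← tsum_mul_right]
    apply tsum_congr
    intro j
    rw [hFval j]
    have := coeff_eq hlam k j
    rw [← hb1] at this
    linear_combination z ^ j * this
  rw [hLHS, hswap]
  -- identify the summed integrand
  apply MeasureTheory.setIntegral_congr_fun measurableSet_Ioc
  intro x hx
  have hxz : ‖(x:ℂ)*z‖ < 1 := by
    rw [norm_mul, Complex.norm_real, Real.norm_eq_abs, abs_of_pos hx.1]
    calc x * ‖z‖ ≤ 1 * ‖z‖ := by
          apply mul_le_mul_of_nonneg_right hx.2 (norm_nonneg z)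
      _ < 1 := by rwa [one_mul]
  have hbin := binG_eq b1 hxz
  have hneg : -b1 = (lam:ℂ) - 1 := by rw [hb1]; ring
  rw [hneg] at hbin
  calc ∑' j, F j x
      = ((x:ℂ)^k * (1 - (x:ℂ))^((lam:ℂ)-1))
        * ∑' j, pochC b1 j / (j.factorial : ℂ) * ((x:ℂ)*z) ^ j := by
        rw [← tsum_mul_left]
        apply tsum_congr
        intro j
        rw [hF]
        simp only
        rw [pow_add, mul_pow]
        ring
    _ = (x:ℂ)^k * (1 - (x:ℂ))^((lam:ℂ)-1) * (1 - (x:ℂ)*z)^((lam:ℂ)-1) := by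
        rw [show (∑' j, pochC b1 j / (j.factorial : ℂ) * ((x:ℂ)*z) ^ j) = binG b1 ((x:ℂ)*z)
          from rfl, hbin]

end Main

/-- **Bound (3.7).** For an integer `k ≥ 0`, `λ > 0` and `|z| < 1`:
`|₂F₁(k+1, 1−λ; k+λ+1; z)| ≤ (1−|z|)^{λ−1}` if `0 < λ ≤ 1`, and
`|₂F₁(k+1, 1−λ; k+λ+1; z)| ≤ (1+|z|)^{λ−1}` if `λ > 1`. -/
theorem hyp2F1_bound_pos (k : ℕ) (lam : ℝ) (hlam : 0 < lam) (z : ℂ)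
    (hz : ‖z‖ < 1) :
    (lam ≤ 1 →
      ‖hyp2F1 ((k : ℂ) + 1) (1 - (lam : ℂ)) ((k : ℂ) + (lam : ℂ) + 1) z‖ ≤
        (1 - ‖z‖) ^ (lam - 1)) ∧
    (1 < lam →
      ‖hyp2F1 ((k : ℂ) + 1) (1 - (lam : ℂ)) ((k : ℂ) + (lam : ℂ) + 1) z‖ ≤
        (1 + ‖z‖) ^ (lam - 1)) := by
  have hz' : ‖z‖ < 1 := by exact hz
  set Breal : ℝ := (k.factorial : ℝ) / ∏ i ∈ Finset.range (k+1), (lam + i) with hBrdef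
  have hprodpos : 0 < ∏ i ∈ Finset.range (k+1), (lam + i) := pos_prod lam hlam (k+1)
  have hBr : 0 < Breal := by
    rw [hBrdef]
    have : (0:ℝ) < (k.factorial : ℝ) := by positivity
    positivity
  have hcast : (((k.factorial:ℕ):ℂ) / pochC (lam:ℂ) (k+1)) = ((Breal : ℝ) : ℂ) := by
    rw [pochC_real, hBrdef, Complex.ofReal_div]
    norm_cast
  -- the real weight integral equals Breal
  have hWeq : (∫ x in Set.Ioc (0:ℝ) 1, ‖(x:ℂ)^k * (1 - (x:ℂ))^((lam:ℂ)-1)‖) = Breal := by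
    have hre : ∀ x ∈ Set.Ioc (0:ℝ) 1,
        (x:ℂ)^k * (1 - (x:ℂ))^((lam:ℂ)-1) = ((x^k * (1-x)^(lam-1) : ℝ) : ℂ) := by
      intro x hx
      have h1x : (0:ℝ) ≤ 1 - x := by linarith [hx.2]
      rw [Complex.ofReal_mul, Complex.ofReal_cpow h1x, Complex.ofReal_pow]
      push_cast
      ring
    have hnorm : ∀ x ∈ Set.Ioc (0:ℝ) 1,
        ‖(x:ℂ)^k * (1 - (x:ℂ))^((lam:ℂ)-1)‖ = x^k * (1-x)^(lam-1) := by
      intro x hx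
      have h1x : (0:ℝ) ≤ 1 - x := by linarith [hx.2]
      rw [hre x hx, Complex.norm_real, Real.norm_eq_abs, abs_of_nonneg
        (mul_nonneg (pow_nonneg (le_of_lt hx.1) k) (Real.rpow_nonneg h1x _))]
    rw [MeasureTheory.setIntegral_congr_fun measurableSet_Ioc hnorm]
    have hcpx : (∫ x in Set.Ioc (0:ℝ) 1, (x:ℂ)^k * (1 - (x:ℂ))^((lam:ℂ)-1))
        = ((∫ x in Set.Ioc (0:ℝ) 1, x^k * (1-x)^(lam-1) : ℝ) : ℂ) := by
      rw [MeasureTheory.setIntegral_congr_fun measurableSet_Ioc hre]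
      exact integral_ofReal
    rw [beta_value hlam k, hcast] at hcpx
    exact (Complex.ofReal_inj.1 hcpx).symm
  -- main bound machine
  have main : ∀ M : ℝ, 0 ≤ M →
      (∀ x ∈ Set.Ioc (0:ℝ) 1, ‖1 - (x:ℂ)*z‖ ^ (lam-1) ≤ M) →
      ‖hyp2F1 ((k : ℂ) + 1) (1 - (lam : ℂ)) ((k : ℂ) + (lam : ℂ) + 1) z‖ ≤ M := by
    intro M hM hMb
    have hrep := hyp_repr hlam hz' k
    have h1 : ‖hyp2F1 ((k : ℂ) + 1) (1 - (lam : ℂ)) ((k : ℂ) + (lam : ℂ) + 1) z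
        * (((k.factorial:ℕ):ℂ) / pochC (lam:ℂ) (k+1))‖
        = ‖hyp2F1 ((k : ℂ) + 1) (1 - (lam : ℂ)) ((k : ℂ) + (lam : ℂ) + 1) z‖
          * Breal := by
      rw [norm_mul, hcast, Complex.norm_real, Real.norm_eq_abs, abs_of_pos hBr]
    have hGint : MeasureTheory.Integrable
        (fun x : ℝ => M * ‖(x:ℂ)^k * (1 - (x:ℂ))^((lam:ℂ)-1)‖)
        (MeasureTheory.volume.restrict (Set.Ioc (0:ℝ) 1)) :=
      (beta_integrable hlam k).norm.const_mul M
    have hae : ∀ᵐ (x : ℝ) ∂(MeasureTheory.volume.restrict (Set.Ioc (0:ℝ) 1)),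
        ‖(x:ℂ)^k * (1 - (x:ℂ))^((lam:ℂ)-1) * (1 - (x:ℂ)*z)^((lam:ℂ)-1)‖
          ≤ M * ‖(x:ℂ)^k * (1 - (x:ℂ))^((lam:ℂ)-1)‖ := by
      rw [MeasureTheory.ae_restrict_iff' measurableSet_Ioc]
      filter_upwards with x
      intro hx
      have hcp : ‖(1 - (x:ℂ)*z)^((lam:ℂ)-1)‖ = ‖1 - (x:ℂ)*z‖ ^ (lam-1) := by
        have : ((lam:ℂ)-1) = ((lam-1 : ℝ) : ℂ) := by push_cast; ring
        rw [this, Complex.norm_cpow_real]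
      rw [norm_mul, hcp]
      calc ‖(x:ℂ)^k * (1 - (x:ℂ))^((lam:ℂ)-1)‖ * ‖1 - (x:ℂ)*z‖ ^ (lam-1)
          ≤ ‖(x:ℂ)^k * (1 - (x:ℂ))^((lam:ℂ)-1)‖ * M :=
            mul_le_mul_of_nonneg_left (hMb x hx) (norm_nonneg _)
        _ = M * ‖(x:ℂ)^k * (1 - (x:ℂ))^((lam:ℂ)-1)‖ := mul_comm _ _
    have hle := MeasureTheory.norm_integral_le_of_norm_le hGint hae
    rw [MeasureTheory.integral_const_mul, hWeq] at hle
    have h2 : ‖hyp2F1 ((k : ℂ) + 1) (1 - (lam : ℂ)) ((k : ℂ) + (lam : ℂ) + 1) z‖ * Breal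
        ≤ M * Breal := by
      rw [← h1, hrep]
      exact hle
    calc ‖hyp2F1 ((k : ℂ) + 1) (1 - (lam : ℂ)) ((k : ℂ) + (lam : ℂ) + 1) z‖
        = ‖hyp2F1 ((k : ℂ) + 1) (1 - (lam : ℂ)) ((k : ℂ) + (lam : ℂ) + 1) z‖ * Breal / Breal := by
          field_simp
      _ ≤ M * Breal / Breal := (div_le_div_iff_of_pos_right hBr).2 h2
      _ = M := by field_simp
  constructor
  · intro hle1
    apply main
    · apply Real.rpow_nonneg
      linarith
    · intro x hx
      have hxz : ‖(x:ℂ)*z‖ ≤ ‖z‖ := by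
        rw [norm_mul, Complex.norm_real, Real.norm_eq_abs, abs_of_pos hx.1]
        calc x * ‖z‖ ≤ 1 * ‖z‖ :=
              mul_le_mul_of_nonneg_right hx.2 (norm_nonneg z)
          _ = ‖z‖ := one_mul _
      have hlow : 1 - ‖z‖ ≤ ‖1 - (x:ℂ)*z‖ := by
        have := norm_sub_norm_le (1:ℂ) ((x:ℂ)*z)
        simp only [norm_one] at this
        linarith
      exact Real.rpow_le_rpow_of_nonpos (by linarith) hlow (by linarith)
  · intro hgt1
    apply main
    · apply Real.rpow_nonneg
      have := norm_nonneg z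
      linarith
    · intro x hx
      have hxz : ‖(x:ℂ)*z‖ ≤ ‖z‖ := by
        rw [norm_mul, Complex.norm_real, Real.norm_eq_abs, abs_of_pos hx.1]
        calc x * ‖z‖ ≤ 1 * ‖z‖ :=
              mul_le_mul_of_nonneg_right hx.2 (norm_nonneg z)
          _ = ‖z‖ := one_mul _
      have hup : ‖1 - (x:ℂ)*z‖ ≤ 1 + ‖z‖ := by
        have := norm_sub_le (1:ℂ) ((x:ℂ)*z)
        simp only [norm_one] at this
        linarith
      exact Real.rpow_le_rpow (norm_nonneg _) hup (by linarith)
end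

section
/- Let k ≥ 0 be an integer, let −1/2 < λ < 0, and let z be a complex number with |z| < 1. Then |₂F₁(k+1, 1−λ; k+λ+1; z)| ≤ [Γ(1+λ)Γ(1−2λ)/Γ(1−λ)]·(1−|z|)^{2λ−1}. -/
open Real

section Aux

open Real Finset Set Filter Topology MeasureTheory

/-- Real Pochhammer product. -/
noncomputable def PR (a : ℝ) (j : ℕ) : ℝ := ∏ i ∈ Finset.range j, (a + i)

lemma PR_pos {a : ℝ} (ha : 0 < a) (j : ℕ) : 0 < PR a j :=
  Finset.prod_pos fun i _ => by positivity

lemma PR_succ (a : ℝ) (j : ℕ) : PR a (j + 1) = PR a j * (a + j) := Finset.prod_range_succ _ _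

lemma PR_one (j : ℕ) : PR 1 j = j.factorial := by
  induction j with
  | zero => simp [PR]
  | succ n ih => rw [PR_succ, ih, Nat.factorial_succ]; push_cast; ring

lemma pochC_real_s3 (a : ℝ) (j : ℕ) : pochC ((a : ℂ)) j = ((PR a j : ℝ) : ℂ) := by
  simp only [pochC, PR]
  push_cast
  rfl

lemma Gamma_mul_PR {a : ℝ} (ha : 0 < a) (j : ℕ) :
    Real.Gamma a * PR a j = Real.Gamma (a + j) := by
  induction j with
  | zero => simp [PR]
  | succ n ih =>
      have h : a + (n + 1 : ℕ) = (a + n) + 1 := by push_cast; ring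
      rw [PR_succ, ← mul_assoc, ih, h, Real.Gamma_add_one (by positivity)]
      ring

lemma partial_sum_le {s r : ℝ} (hs : 0 < s) (hr0 : 0 ≤ r) (hr1 : r < 1) (n : ℕ) :
    ∑ j ∈ Finset.range n, PR s j / (Nat.factorial j) * r ^ j ≤ (1 - r) ^ (-s) := by
  have hc : 0 < 1 - r := by linarith
  have hGs : 0 < Real.Gamma s := Real.Gamma_pos_of_pos hs
  set F : ℕ → ℝ → ℝ := fun j t => Real.exp (-t) * t ^ (s - 1) * ((r * t) ^ j / (Nat.factorial j))
    with hF
  have heq : ∀ j : ℕ, EqOn (fun t : ℝ =>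
      (r ^ j / (Nat.factorial j)) * (Real.exp (-t) * t ^ (s + j - 1))) (F j) (Ioi 0) := by
    intro j t ht
    have ht0 : (0:ℝ) < t := ht
    simp only [hF]
    rw [mul_pow, show s + j - 1 = (s - 1) + (j : ℝ) by ring, Real.rpow_add ht0,
      Real.rpow_natCast]
    ring
  have hint : ∀ j : ℕ, IntegrableOn (F j) (Ioi 0) := by
    intro j
    refine IntegrableOn.congr_fun ?_ (heq j) measurableSet_Ioi
    exact (Real.GammaIntegral_convergent (by positivity : 0 < s + j)).const_mul _
  have hval : ∀ j : ℕ, ∫ t in Ioi 0, F j t = PR s j / (Nat.factorial j) * r ^ j * Real.Gamma s := by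
    intro j
    rw [← setIntegral_congr_fun measurableSet_Ioi (heq j), MeasureTheory.integral_const_mul,
      ← Real.Gamma_eq_integral (by positivity : 0 < s + (j:ℝ)), ← Gamma_mul_PR hs]
    ring
  have hG : IntegrableOn (fun t : ℝ => t ^ (s - 1) * Real.exp (-((1 - r) * t))) (Ioi 0) := by
    have h0 := Real.GammaIntegral_convergent hs
    have h1 : IntegrableOn (fun t : ℝ => Real.exp (-((1-r) * t)) * ((1-r) * t) ^ (s - 1))
        (Ioi 0) := by
      have := (integrableOn_Ioi_comp_mul_left_iff
        (fun x : ℝ => Real.exp (-x) * x ^ (s - 1)) 0 hc).mpr (by simpa using h0)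
      simpa using this
    have h2 := h1.const_mul ((1-r) ^ (s - 1))⁻¹
    refine IntegrableOn.congr_fun h2 (fun t ht => ?_) measurableSet_Ioi
    have ht0 : (0:ℝ) < t := ht
    rw [Real.mul_rpow hc.le ht0.le]
    field_simp
  have key : (∑ j ∈ Finset.range n, PR s j / (Nat.factorial j) * r ^ j) * Real.Gamma s
      ≤ (1 / (1 - r)) ^ s * Real.Gamma s := by
    calc (∑ j ∈ Finset.range n, PR s j / (Nat.factorial j) * r ^ j) * Real.Gamma s
        = ∑ j ∈ Finset.range n, ∫ t in Ioi 0, F j t := by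
          rw [Finset.sum_mul]; exact Finset.sum_congr rfl fun j _ => (hval j).symm
      _ = ∫ t in Ioi 0, ∑ j ∈ Finset.range n, F j t := by
          rw [MeasureTheory.integral_finset_sum _ (fun j _ => hint j)]
      _ ≤ ∫ t in Ioi 0, t ^ (s - 1) * Real.exp (-((1 - r) * t)) := by
          refine setIntegral_mono_on (integrable_finset_sum _ (fun j _ => hint j)) hG
            measurableSet_Ioi (fun t ht => ?_)
          have ht0 : (0:ℝ) < t := ht
          have hb : ∑ j ∈ Finset.range n, (r * t) ^ j / (Nat.factorial j) ≤ Real.exp (r * t) :=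
            Real.sum_le_exp_of_nonneg (by positivity) n
          calc ∑ j ∈ Finset.range n, F j t
              = Real.exp (-t) * t ^ (s - 1) *
                  ∑ j ∈ Finset.range n, (r * t) ^ j / (Nat.factorial j) := by
                rw [Finset.mul_sum]
            _ ≤ Real.exp (-t) * t ^ (s - 1) * Real.exp (r * t) := by
                have : (0:ℝ) ≤ Real.exp (-t) * t ^ (s - 1) := by positivity
                exact mul_le_mul_of_nonneg_left hb this
            _ = t ^ (s - 1) * Real.exp (-((1 - r) * t)) := by
                rw [mul_comm (Real.exp (-t)), mul_assoc, ← Real.exp_add]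
                ring_nf
      _ = (1 / (1 - r)) ^ s * Real.Gamma s := Real.integral_rpow_mul_exp_neg_mul_Ioi hs hc
  have h3 : (1 / (1 - r)) ^ s = (1 - r) ^ (-s) := by
    rw [one_div, Real.inv_rpow hc.le, ← Real.rpow_neg hc.le]
  calc ∑ j ∈ Finset.range n, PR s j / (Nat.factorial j) * r ^ j
      ≤ (1 / (1 - r)) ^ s := le_of_mul_le_mul_right (by linarith [key]) hGs
    _ = (1 - r) ^ (-s) := h3

lemma ratio_le_C {lam : ℝ} (h1 : -1/2 < lam) (h2 : lam < 0) (j : ℕ) :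
    PR (1-lam) j * (Nat.factorial j : ℝ) ≤
      (Real.Gamma (1+lam) * Real.Gamma (1-2*lam) / Real.Gamma (1-lam)) *
        (PR (1+lam) j * PR (1-2*lam) j) := by
  have hp1 : (0:ℝ) < 1 + lam := by linarith
  have hp2 : (0:ℝ) < 1 - lam := by linarith
  have hp3 : (0:ℝ) < 1 - 2*lam := by linarith
  set c : ℕ → ℝ := fun j => PR (1-lam) j * (Nat.factorial j : ℝ) /
      (PR (1+lam) j * PR (1-2*lam) j) with hcdef
  have hmono : Monotone c := by
    refine monotone_nat_of_le_succ (fun n => ?_)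
    have hA := PR_pos hp2 n
    have hB := PR_pos hp1 n
    have hC := PR_pos hp3 n
    have hfac : (0:ℝ) < (Nat.factorial n : ℝ) := by positivity
    simp only [hcdef, PR_succ, Nat.factorial_succ]
    rw [div_le_div_iff₀ (by positivity) (by positivity)]
    push_cast
    have key : (1 + lam + n) * (1 - 2*lam + n) ≤ (1 - lam + n) * (n + 1) := by
      nlinarith [sq_nonneg lam]
    have hE : (0:ℝ) ≤ PR (1-lam) n * (Nat.factorial n : ℝ) *
        (PR (1+lam) n * PR (1-2*lam) n) := by positivity
    nlinarith [mul_le_mul_of_nonneg_left key hE]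
  have hlim : Tendsto c atTop
      (𝓝 (Real.Gamma (1+lam) * Real.Gamma (1-2*lam) / Real.Gamma (1-lam))) := by
    have hQ : Tendsto (fun n => Real.GammaSeq (1+lam) n * Real.GammaSeq (1-2*lam) n /
        (Real.GammaSeq (1-lam) n * Real.GammaSeq 1 n)) atTop
        (𝓝 (Real.Gamma (1+lam) * Real.Gamma (1-2*lam) /
          (Real.Gamma (1-lam) * Real.Gamma 1))) := by
      refine Tendsto.div ((Real.GammaSeq_tendsto_Gamma _).mul (Real.GammaSeq_tendsto_Gamma _))
        ((Real.GammaSeq_tendsto_Gamma _).mul (Real.GammaSeq_tendsto_Gamma 1)) ?_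
      have := Real.Gamma_pos_of_pos hp2
      rw [Real.Gamma_one]
      positivity
    rw [Real.Gamma_one, mul_one] at hQ
    have heq : ∀ᶠ n in atTop, (fun n => Real.GammaSeq (1+lam) n * Real.GammaSeq (1-2*lam) n /
        (Real.GammaSeq (1-lam) n * Real.GammaSeq 1 n)) n = c (n+1) := by
      filter_upwards [eventually_ge_atTop 1] with n hn
      have hn0 : (0:ℝ) < n := by exact_mod_cast hn
      have hfac : (0:ℝ) < (Nat.factorial n : ℝ) := by positivity
      have hA := PR_pos hp2 (n+1)
      have hB := PR_pos hp1 (n+1)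
      have hC := PR_pos hp3 (n+1)
      have hD := PR_pos one_pos (n+1)
      have hpow : (n:ℝ) ^ (1+lam) * (n:ℝ) ^ (1-2*lam) = (n:ℝ) ^ (1-lam) * (n:ℝ) ^ (1:ℝ) := by
        rw [← Real.rpow_add hn0, ← Real.rpow_add hn0]
        congr 1
        ring
      have hP1 : ∏ j ∈ Finset.range (n+1), ((1+lam) + (j:ℝ)) = PR (1+lam) (n+1) := rfl
      have hP2 : ∏ j ∈ Finset.range (n+1), ((1-2*lam) + (j:ℝ)) = PR (1-2*lam) (n+1) := rfl
      have hP3 : ∏ j ∈ Finset.range (n+1), ((1-lam) + (j:ℝ)) = PR (1-lam) (n+1) := rfl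
      have hP4 : ∏ j ∈ Finset.range (n+1), ((1:ℝ) + (j:ℝ)) = PR 1 (n+1) := rfl
      simp only [hcdef, Real.GammaSeq, hP1, hP2, hP3, hP4, PR_one]
      have hx1 : (0:ℝ) < (n:ℝ) ^ (1+lam) := Real.rpow_pos_of_pos hn0 _
      have hx2 : (0:ℝ) < (n:ℝ) ^ (1-2*lam) := Real.rpow_pos_of_pos hn0 _
      have hx3 : (0:ℝ) < (n:ℝ) ^ (1-lam) := Real.rpow_pos_of_pos hn0 _
      have hx4 : (0:ℝ) < (n:ℝ) ^ (1:ℝ) := Real.rpow_pos_of_pos hn0 _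
      have hfac2 : (0:ℝ) < (Nat.factorial (n+1) : ℝ) := by positivity
      field_simp
      rw [Real.rpow_one] at hpow
      rw [show (1 - lam*2) = 1 - 2*lam by ring, hpow]
      norm_num
    have := hQ.congr' heq
    exact (tendsto_add_atTop_iff_nat 1).mp this
  have hle := hmono.ge_of_tendsto hlim j
  have hB := PR_pos hp1 j
  have hC := PR_pos hp3 j
  rw [hcdef] at hle
  calc PR (1-lam) j * (Nat.factorial j : ℝ)
      = (PR (1-lam) j * (Nat.factorial j : ℝ) / (PR (1+lam) j * PR (1-2*lam) j)) *
        (PR (1+lam) j * PR (1-2*lam) j) := by rw [div_mul_cancel₀ _ (by positivity)]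
    _ ≤ _ := mul_le_mul_of_nonneg_right hle (by positivity)

lemma k_mono {lam : ℝ} (h1 : -1/2 < lam) (h2 : lam < 0) (k j : ℕ) :
    PR ((k:ℝ)+1) j * PR (1+lam) j ≤ PR 1 j * PR ((k:ℝ)+lam+1) j := by
  simp only [PR, ← Finset.prod_mul_distrib]
  refine Finset.prod_le_prod (fun i _ => ?_) (fun i _ => ?_)
  · have : (0:ℝ) ≤ (k:ℝ) := Nat.cast_nonneg k
    have : (0:ℝ) ≤ (i:ℝ) := Nat.cast_nonneg i
    nlinarith
  · have hk : (0:ℝ) ≤ (k:ℝ) := Nat.cast_nonneg k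
    have hi : (0:ℝ) ≤ (i:ℝ) := Nat.cast_nonneg i
    nlinarith

end Aux

/-- **Bound (3.8).** For an integer `k ≥ 0`, `−1/2 < λ < 0` and `|z| < 1`:
`|₂F₁(k+1, 1−λ; k+λ+1; z)| ≤ [Γ(1+λ)Γ(1−2λ)/Γ(1−λ)]·(1−|z|)^{2λ−1}`. -/
theorem hyp2F1_bound_neg (k : ℕ) (lam : ℝ) (h1 : -1/2 < lam) (h2 : lam < 0) (z : ℂ)
    (hz : ‖z‖ < 1) :
    ‖hyp2F1 ((k : ℂ) + 1) (1 - (lam : ℂ)) ((k : ℂ) + (lam : ℂ) + 1) z‖ ≤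
      Real.Gamma (1 + lam) * Real.Gamma (1 - 2 * lam) / Real.Gamma (1 - lam) *
        (1 - ‖z‖) ^ (2 * lam - 1) := by
  have hp1 : (0:ℝ) < 1 + lam := by linarith
  have hp2 : (0:ℝ) < 1 - lam := by linarith
  have hp3 : (0:ℝ) < 1 - 2*lam := by linarith
  have hpk1 : (0:ℝ) < (k:ℝ) + 1 := by positivity
  have hpk2 : (0:ℝ) < (k:ℝ) + lam + 1 := by
    have : (0:ℝ) ≤ (k:ℝ) := Nat.cast_nonneg k
    linarith
  set r : ℝ := ‖z‖ with hr
  have hr0 : 0 ≤ r := norm_nonneg z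
  have hr1 : r < 1 := hz
  set C : ℝ := Real.Gamma (1+lam) * Real.Gamma (1-2*lam) / Real.Gamma (1-lam) with hCdef
  have hCpos : 0 < C := by
    have g1 := Real.Gamma_pos_of_pos hp1
    have g2 := Real.Gamma_pos_of_pos hp3
    have g3 := Real.Gamma_pos_of_pos hp2
    positivity
  set g : ℕ → ℝ := fun j => PR ((k:ℝ)+1) j * PR (1-lam) j /
      (PR ((k:ℝ)+lam+1) j * (Nat.factorial j : ℝ)) * r ^ j with hgdef
  set base : ℕ → ℝ := fun j => PR (1-2*lam) j / (Nat.factorial j : ℝ) * r ^ j with hbase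
  -- base series is summable with sum ≤ (1-r)^(2λ-1)
  have hbase_nonneg : ∀ j, 0 ≤ base j := by
    intro j
    have := PR_pos hp3 j
    have : (0:ℝ) < (Nat.factorial j : ℝ) := by positivity
    positivity
  have hbase_partial := fun n => partial_sum_le hp3 hr0 hr1 n
  have hbase_sum : Summable base := summable_of_sum_range_le hbase_nonneg hbase_partial
  have hbase_tsum : ∑' j, base j ≤ (1 - r) ^ (-(1-2*lam)) :=
    hbase_sum.tsum_le_of_sum_range_le hbase_partial
  -- termwise bound g ≤ C * base
  have hgle : ∀ j, g j ≤ C * base j := by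
    intro j
    have hA := PR_pos hpk1 j
    have hB := PR_pos hp2 j
    have hD := PR_pos hpk2 j
    have hE := PR_pos hp1 j
    have hF := PR_pos hp3 j
    have hfac : (0:ℝ) < (Nat.factorial j : ℝ) := by positivity
    have hcore : PR ((k:ℝ)+1) j * PR (1-lam) j ≤
        C * PR (1-2*lam) j * PR ((k:ℝ)+lam+1) j := by
      have hpos : (0:ℝ) < PR (1+lam) j * (Nat.factorial j : ℝ) := by positivity
      refine le_of_mul_le_mul_right ?_ hpos
      have hG1 := PR_pos (one_pos (α := ℝ)) j
      have hmul := mul_le_mul (k_mono h1 h2 k j) (ratio_le_C h1 h2 j)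
        (by positivity) (by positivity)
      rw [PR_one] at hmul
      calc PR ((k:ℝ)+1) j * PR (1-lam) j * (PR (1+lam) j * (Nat.factorial j : ℝ))
          = PR ((k:ℝ)+1) j * PR (1+lam) j * (PR (1-lam) j * (Nat.factorial j : ℝ)) := by ring
        _ ≤ (Nat.factorial j : ℝ) * PR ((k:ℝ)+lam+1) j * (C * (PR (1+lam) j * PR (1-2*lam) j)) :=
            hmul
        _ = C * PR (1-2*lam) j * PR ((k:ℝ)+lam+1) j * (PR (1+lam) j * (Nat.factorial j : ℝ)) := by
            ring
    have hcoeff : PR ((k:ℝ)+1) j * PR (1-lam) j / (PR ((k:ℝ)+lam+1) j * (Nat.factorial j : ℝ))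
        ≤ C * (PR (1-2*lam) j / (Nat.factorial j : ℝ)) := by
      rw [div_le_iff₀ (by positivity)]
      calc PR ((k:ℝ)+1) j * PR (1-lam) j ≤ C * PR (1-2*lam) j * PR ((k:ℝ)+lam+1) j := hcore
        _ = C * (PR (1-2*lam) j / (Nat.factorial j : ℝ)) *
            (PR ((k:ℝ)+lam+1) j * (Nat.factorial j : ℝ)) := by field_simp
    have := mul_le_mul_of_nonneg_right hcoeff (pow_nonneg hr0 j)
    simpa [hgdef, hbase, mul_assoc] using this
  have hg_nonneg : ∀ j, 0 ≤ g j := by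
    intro j
    have hA := PR_pos hpk1 j
    have hB := PR_pos hp2 j
    have hD := PR_pos hpk2 j
    have hfac : (0:ℝ) < (Nat.factorial j : ℝ) := by positivity
    positivity
  have hCb_sum : Summable (fun j => C * base j) := hbase_sum.mul_left C
  have hg_sum : Summable g := Summable.of_nonneg_of_le hg_nonneg hgle hCb_sum
  -- norms of the terms
  set term : ℕ → ℂ := fun j => pochC ((k:ℂ) + 1) j * pochC (1 - (lam:ℂ)) j /
      (pochC ((k:ℂ) + (lam:ℂ) + 1) j * (Nat.factorial j : ℂ)) * z ^ j with hterm
  have habs : ∀ j, ‖term j‖ = g j := by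
    intro j
    have e1 : ((k:ℂ) + 1) = ((((k:ℝ) + 1 : ℝ)) : ℂ) := by push_cast; ring
    have e2 : (1 - (lam:ℂ)) = (((1 - lam : ℝ)) : ℂ) := by push_cast; ring
    have e3 : ((k:ℂ) + (lam:ℂ) + 1) = ((((k:ℝ) + lam + 1 : ℝ)) : ℂ) := by push_cast; ring
    have e4 : ((Nat.factorial j : ℂ)) = (((Nat.factorial j : ℝ)) : ℂ) := by push_cast; ring
    simp only [hterm, e1, e2, e3, e4, pochC_real_s3]
    have e5 : (((PR ((k:ℝ)+1) j : ℝ) : ℂ) * ((PR (1-lam) j : ℝ) : ℂ) /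
        (((PR ((k:ℝ)+lam+1) j : ℝ) : ℂ) * ((Nat.factorial j : ℝ) : ℂ)) * z ^ j)
        = (((PR ((k:ℝ)+1) j * PR (1-lam) j / (PR ((k:ℝ)+lam+1) j * (Nat.factorial j : ℝ)) : ℝ) : ℂ)
          * z ^ j) := by
      push_cast
      ring
    rw [e5, norm_mul, Complex.norm_real, norm_pow, ← hr]
    rw [Real.norm_eq_abs, abs_of_nonneg]
    · have hA := PR_pos hpk1 j
      have hB := PR_pos hp2 j
      have hD := PR_pos hpk2 j
      have hfac : (0:ℝ) < (Nat.factorial j : ℝ) := by positivity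
      positivity
  have hnorm_sum : Summable (fun j => ‖term j‖) := by
    simpa only [habs] using hg_sum
  have hfinal : ‖hyp2F1 ((k : ℂ) + 1) (1 - (lam : ℂ)) ((k : ℂ) + (lam : ℂ) + 1) z‖
      ≤ C * (1 - r) ^ (-(1-2*lam)) := by
    have hun : hyp2F1 ((k : ℂ) + 1) (1 - (lam : ℂ)) ((k : ℂ) + (lam : ℂ) + 1) z
        = ∑' j, term j := rfl
    rw [hun]
    calc ‖∑' j, term j‖ ≤ ∑' j, ‖term j‖ := norm_tsum_le_tsum_norm hnorm_sum
      _ = ∑' j, g j := tsum_congr habs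
      _ ≤ ∑' j, C * base j := Summable.tsum_le_tsum hgle hg_sum hCb_sum
      _ = C * ∑' j, base j := tsum_mul_left
      _ ≤ C * (1 - r) ^ (-(1-2*lam)) := mul_le_mul_of_nonneg_left hbase_tsum hCpos.le
  have hexp : (1 - r) ^ (-(1-2*lam)) = (1 - r) ^ (2*lam - 1) := by
    congr 1
    ring
  rw [hexp] at hfinal
  exact hfinal
end

section
/- Let λ > −1/2 with λ ≠ 0 and let α > 0 be a non-integer real. For f_α(x) = (1+x)^α on [−1,1], the Gegenbauer coefficients are a_k^λ = (−1)^{k+1}·[2^{2λ+α}·sin(απ)·Γ(λ)·Γ(α+λ+1/2)·Γ(α+1)·(k+λ)·Γ(k−α)] / [π^{3/2}·Γ(k+α+2λ+1)] for every k ≥ 0. -/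
open Real Set MeasureTheory

/-- Pochhammer symbol `(a)_j = a(a+1)⋯(a+j−1)` for real `a`. -/
noncomputable def poch (a : ℝ) (j : ℕ) : ℝ := ∏ i ∈ Finset.range j, (a + i)

/-- Gauss hypergeometric function `₂F₁(a,b;c;z)` (real arguments), as a `tsum`. -/
noncomputable def hyp2F1R (a b c z : ℝ) : ℝ :=
  ∑' j : ℕ, poch a j * poch b j / (poch c j * (Nat.factorial j : ℝ)) * z ^ j

/-- The Gegenbauer polynomial `C_n^λ(x)`. -/
noncomputable def gegC (lam : ℝ) (n : ℕ) (x : ℝ) : ℝ :=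
  (poch (2 * lam) n / (Nat.factorial n : ℝ)) *
    ∑ j ∈ Finset.range (n + 1),
      (poch (-(n : ℝ)) j * poch ((n : ℝ) + 2 * lam) j /
        (poch (lam + 1 / 2) j * (Nat.factorial j : ℝ))) * ((1 - x) / 2) ^ j

/-- The Gegenbauer weight `ω_λ(x) = (1−x²)^{λ−1/2}`. -/
noncomputable def gegWeight (lam x : ℝ) : ℝ := (1 - x ^ 2) ^ (lam - 1 / 2)

/-- The normalization constant `h_n^λ`. -/
noncomputable def gegNorm (lam : ℝ) (n : ℕ) : ℝ :=
  π * (2 : ℝ) ^ (1 - 2 * lam) * Real.Gamma ((n : ℝ) + 2 * lam) /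
    (Real.Gamma lam ^ 2 * Real.Gamma ((n : ℝ) + 1) * ((n : ℝ) + lam))

/-- The Gegenbauer coefficient `a_k^λ` of `f`. -/
noncomputable def gegCoeff (lam : ℝ) (f : ℝ → ℝ) (k : ℕ) : ℝ :=
  (1 / gegNorm lam k) * ∫ x in (-1 : ℝ)..1, gegWeight lam x * gegC lam k x * f x

/-- The Gegenbauer projection `S_n^λ(f)`. -/
noncomputable def gegProj (lam : ℝ) (n : ℕ) (f : ℝ → ℝ) (x : ℝ) : ℝ :=
  ∑ k ∈ Finset.range (n + 1), gegCoeff lam f k * gegC lam k x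

/-- The Bernstein ellipse `E_ρ` (the curve). -/
noncomputable def bernsteinEllipse (ρ : ℝ) : Set ℂ :=
  {z | ∃ u : ℂ, ‖u‖ = ρ ∧ z = (u + u⁻¹) / 2}

/-- The closed region bounded by the Bernstein ellipse `E_ρ`. -/
noncomputable def bernsteinRegion (ρ : ℝ) : Set ℂ :=
  {z | ∃ u : ℂ, 1 ≤ ‖u‖ ∧ ‖u‖ ≤ ρ ∧ z = (u + u⁻¹) / 2}

/-- Arclength of the Bernstein ellipse `E_ρ`. -/
noncomputable def ellipseLength (ρ : ℝ) : ℝ :=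
  ∫ θ in (0 : ℝ)..(2 * π),
    Real.sqrt (((ρ + ρ⁻¹) / 2) ^ 2 * Real.sin θ ^ 2 + ((ρ - ρ⁻¹) / 2) ^ 2 * Real.cos θ ^ 2)

/-- `M = max_{z ∈ E_ρ} |F(z)|`. -/
noncomputable def ellipseMax (ρ : ℝ) (F : ℂ → ℂ) : ℝ :=
  sSup ((fun z => ‖F z‖) '' bernsteinEllipse ρ)

/-- The constant `D_λ(ρ)` from Theorem 3.2. -/
noncomputable def Dlam (lam ρ : ℝ) (F : ℂ → ℂ) : ℝ :=
  (ellipseMax ρ F * ellipseLength ρ / (π * ρ)) *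
    (if lam < 0 then
      |Real.Gamma lam| * Real.Gamma (1 + lam) * Real.Gamma (1 - 2 * lam) /
        Real.Gamma (1 - lam) * (1 - ρ⁻¹ ^ 2) ^ (2 * lam - 1)
    else if lam ≤ 1 then lam⁻¹ * (1 - ρ⁻¹ ^ 2) ^ (lam - 1)
    else Real.Gamma lam * (1 + ρ⁻¹ ^ 2) ^ (lam - 1))

/-- The Dirichlet kernel `D_n^λ(x,t)` of the Gegenbauer projection. -/
noncomputable def dirKernel (lam : ℝ) (n : ℕ) (x t : ℝ) : ℝ :=
  ∑ k ∈ Finset.range (n + 1), gegC lam k x * gegC lam k t / gegNorm lam k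

/-- The maximum error `sup_{x∈[−1,1]} |f(x) − S_n^λ(f)(x)|`. -/
noncomputable def maxErr (lam : ℝ) (n : ℕ) (f : ℝ → ℝ) : ℝ :=
  sSup ((fun x => |f x - gegProj lam n f x|) '' Set.Icc (-1 : ℝ) 1)

/-- `f` is piecewise analytic on `[−1,1]`: there are finitely many points of `(−1,1)`
off which `f` is analytic (within `[−1,1]`) and at which `f` fails to be analytic. -/
def PiecewiseAnalyticOn (f : ℝ → ℝ) : Prop :=
  ∃ S : Finset ℝ, (↑S : Set ℝ) ⊆ Set.Ioo (-1 : ℝ) 1 ∧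
    (∀ x ∈ Set.Icc (-1 : ℝ) 1 \ (↑S : Set ℝ), AnalyticWithinAt ℝ f (Set.Icc (-1 : ℝ) 1) x) ∧
    (∀ x ∈ S, ¬ AnalyticWithinAt ℝ f (Set.Icc (-1 : ℝ) 1) x)



lemma poch_zero (a : ℝ) : poch a 0 = 1 := by simp [poch]

lemma poch_succ (a : ℝ) (j : ℕ) : poch a (j + 1) = poch a j * (a + j) := by
  simp [poch, Finset.prod_range_succ]

lemma poch_succ' (a : ℝ) (j : ℕ) : poch a (j + 1) = a * poch (a + 1) j := by
  simp only [poch, Finset.prod_range_succ', Nat.cast_add, Nat.cast_one, Nat.cast_zero, add_zero]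
  rw [mul_comm]
  congr 1
  exact Finset.prod_congr rfl fun i _ => by ring

lemma poch_pos {a : ℝ} (ha : 0 < a) (j : ℕ) : 0 < poch a j :=
  Finset.prod_pos fun i _ => by positivity

lemma Gamma_poch (a : ℝ) (n : ℕ) (h : ∀ i : ℕ, i < n → a + i ≠ 0) :
    Real.Gamma (a + n) = poch a n * Real.Gamma a := by
  induction n with
  | zero => simp [poch_zero]
  | succ n ih =>
    have h1 : a + (n : ℝ) ≠ 0 := h n (by omega)
    have h2 : a + ((n + 1 : ℕ) : ℝ) = (a + n) + 1 := by push_cast; ring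
    rw [h2, Real.Gamma_add_one h1, ih (fun i hi => h i (by omega)), poch_succ]
    ring

lemma poch_neg_nat (k j : ℕ) (hj : j ≤ k) :
    poch (-(k : ℝ)) j = (-1 : ℝ) ^ j * (k.choose j) * (Nat.factorial j) := by
  induction j with
  | zero => simp [poch_zero]
  | succ j ih =>
    have hj' : j ≤ k := by omega
    rw [poch_succ, ih hj']
    have hc : ((k.choose (j+1) : ℝ)) * ((j:ℝ)+1) = (k.choose j : ℝ) * ((k : ℝ) - j) := by
      have h := Nat.choose_succ_right_eq k j
      have hcast : ((k.choose (j+1)) : ℝ) * (((j+1) : ℕ) : ℝ) = ((k.choose j) : ℝ) * (((k - j) : ℕ) : ℝ) := by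
        exact_mod_cast congrArg (Nat.cast (R := ℝ)) h
      push_cast [Nat.cast_sub hj'] at hcast
      push_cast
      linarith [hcast]
    have hfac : ((Nat.factorial (j+1) : ℕ) : ℝ) = ((j:ℝ)+1) * (Nat.factorial j) := by
      push_cast [Nat.factorial_succ]; ring
    rw [hfac]
    linear_combination ((-1:ℝ)^j * (Nat.factorial j : ℝ)) * hc

lemma chu (k : ℕ) : ∀ b c : ℝ, 0 < c →
    ∑ j ∈ Finset.range (k + 1), (-1 : ℝ) ^ j * (k.choose j) * poch b j / poch c j
      = poch (c - b) k / poch c k := by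
  induction k with
  | zero => intro b c hc; simp [poch_zero]
  | succ k ih =>
    intro b c hc
    have hpc : ∀ n, poch c n ≠ 0 := fun n => (poch_pos hc n).ne'
    have hc1 : (0:ℝ) < c + 1 := by linarith
    have expand : ∀ j ∈ Finset.range (k + 2),
        (-1 : ℝ) ^ j * ((k+1).choose j) * poch b j / poch c j
        = (if j ≤ k then (-1 : ℝ) ^ j * (k.choose j) * poch b j / poch c j else 0)
          + (if 1 ≤ j then (-1:ℝ)^j * (k.choose (j-1)) * poch b j / poch c j else 0) := by
      intro j hj
      rcases Nat.eq_zero_or_pos j with h0 | h1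
      · subst h0; simp [poch_zero]
      · obtain ⟨i, rfl⟩ : ∃ i, j = i + 1 := ⟨j - 1, by omega⟩
        rw [Nat.choose_succ_succ]
        simp only [Nat.add_sub_cancel, if_pos (by omega : 1 ≤ i + 1)]
        by_cases hik : i + 1 ≤ k
        · rw [if_pos hik]; push_cast; ring
        · have hz : k.choose (i+1) = 0 := Nat.choose_eq_zero_of_lt (by omega)
          rw [if_neg hik, hz]; push_cast; ring
    rw [Finset.sum_congr rfl expand, Finset.sum_add_distrib]
    have e1 : ∑ j ∈ Finset.range (k + 2),
        (if j ≤ k then (-1 : ℝ) ^ j * (k.choose j) * poch b j / poch c j else 0)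
        = ∑ j ∈ Finset.range (k + 1), (-1 : ℝ) ^ j * (k.choose j) * poch b j / poch c j := by
      rw [Finset.sum_range_succ, if_neg (by omega)]
      rw [add_zero]
      exact Finset.sum_congr rfl fun j hj => if_pos (by simpa [Nat.lt_succ_iff] using hj)
    have e2 : ∑ j ∈ Finset.range (k + 2),
        (if 1 ≤ j then (-1:ℝ)^j * (k.choose (j-1)) * poch b j / poch c j else 0)
        = -(b/c) * ∑ j ∈ Finset.range (k + 1),
            (-1 : ℝ) ^ j * (k.choose j) * poch (b+1) j / poch (c+1) j := by
      rw [Finset.sum_range_succ']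
      simp only [if_neg (by omega : ¬ (1:ℕ) ≤ 0), add_zero, Nat.add_sub_cancel,
        if_pos (by omega : ∀ {i : ℕ}, 1 ≤ i + 1)]
      rw [Finset.mul_sum]
      refine Finset.sum_congr rfl fun j hj => ?_
      rw [if_pos (by omega), poch_succ' b, poch_succ' c]
      have hcn : c ≠ 0 := hc.ne'
      have hpcn : poch (c+1) j ≠ 0 := (poch_pos hc1 j).ne'
      field_simp
      ring
    rw [e1, e2, ih b c hc, ih (b+1) (c+1) hc1]
    have hcb : c + 1 - (b + 1) = c - b := by ring
    rw [hcb]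
    have hQ : poch (c+1) k = poch c k * (c + k) / c := by
      have h1 : c * poch (c+1) k = poch c k * (c + k) := by
        rw [← poch_succ', poch_succ]
      field_simp
      linarith [h1]
    rw [hQ, poch_succ (c - b) k, poch_succ c k]
    have h2 : c + (k:ℝ) ≠ 0 := by positivity
    have h3 : poch c k ≠ 0 := hpc k
    field_simp
    ring


lemma realBeta (p q : ℝ) (hp : 0 < p) (hq : 0 < q) :
    ∫ x in (0:ℝ)..1, x ^ (p-1) * (1-x) ^ (q-1)
      = Real.Gamma p * Real.Gamma q / Real.Gamma (p+q) := by
  have hb : Complex.betaIntegral (p:ℂ) (q:ℂ)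
      = ((∫ x in (0:ℝ)..1, x ^ (p-1) * (1-x) ^ (q-1) : ℝ) : ℂ) := by
    rw [Complex.betaIntegral, ← intervalIntegral.integral_ofReal]
    refine intervalIntegral.integral_congr fun x hx => ?_
    rw [Set.uIcc_of_le (by norm_num : (0:ℝ) ≤ 1)] at hx
    have hx0 : (0:ℝ) ≤ x := hx.1
    have hx1 : (0:ℝ) ≤ 1 - x := by linarith [hx.2]
    rw [Complex.ofReal_mul, Complex.ofReal_cpow hx0, Complex.ofReal_cpow hx1]
    push_cast
    ring
  have hg := Complex.Gamma_mul_Gamma_eq_betaIntegral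
    (s := (p:ℂ)) (t := (q:ℂ)) (by simpa using hp) (by simpa using hq)
  rw [hb] at hg
  have hpq : ((p:ℂ) + (q:ℂ)) = ((p+q : ℝ) : ℂ) := by push_cast; ring
  rw [hpq, Complex.Gamma_ofReal, Complex.Gamma_ofReal, Complex.Gamma_ofReal] at hg
  have hg' : Real.Gamma p * Real.Gamma q
      = Real.Gamma (p+q) * ∫ x in (0:ℝ)..1, x ^ (p-1) * (1-x) ^ (q-1) := by
    exact_mod_cast hg
  have hne : Real.Gamma (p+q) ≠ 0 := (Real.Gamma_pos_of_pos (by linarith)).ne'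
  field_simp
  linarith [hg']

lemma betaIntegrable (p q : ℝ) (hp : -1 < p) (hq : -1 < q) :
    IntervalIntegrable (fun x : ℝ => (1-x) ^ p * (1+x) ^ q) volume (-1) 1 := by
  have h1 : IntervalIntegrable (fun x : ℝ => (1-x) ^ p * (1+x) ^ q) volume (-1) 0 := by
    have hint : IntervalIntegrable (fun x : ℝ => (1+x) ^ q) volume (-1) 0 := by
      have := (intervalIntegral.intervalIntegrable_rpow' hq (a := 0) (b := 1)).comp_add_right 1
      simpa [add_comm] using this
    have hcont : ContinuousOn (fun x : ℝ => (1-x) ^ p) (Set.uIcc (-1) 0) := by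
      apply ContinuousOn.rpow_const (by fun_prop)
      intro x hx
      rw [Set.uIcc_of_le (by norm_num : (-1:ℝ) ≤ 0)] at hx
      exact Or.inl (by nlinarith [hx.2] : (1:ℝ) - x ≠ 0)
    exact hint.continuousOn_mul hcont
  have h2 : IntervalIntegrable (fun x : ℝ => (1-x) ^ p * (1+x) ^ q) volume 0 1 := by
    have hint : IntervalIntegrable (fun x : ℝ => (1-x) ^ p) volume 0 1 := by
      have := (intervalIntegral.intervalIntegrable_rpow' hp (a := 0) (b := 1)).comp_sub_left 1
      simpa using this.symm
    have hcont : ContinuousOn (fun x : ℝ => (1+x) ^ q) (Set.uIcc 0 1) := by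
      apply ContinuousOn.rpow_const (by fun_prop)
      intro x hx
      rw [Set.uIcc_of_le (by norm_num : (0:ℝ) ≤ 1)] at hx
      exact Or.inl (by nlinarith [hx.1] : (1:ℝ) + x ≠ 0)
    exact hint.mul_continuousOn hcont
  exact h1.trans h2

lemma betaVal (p q : ℝ) (hp : -1 < p) (hq : -1 < q) :
    ∫ x in (-1:ℝ)..1, (1-x) ^ p * (1+x) ^ q
      = 2 ^ (p+q+1) * (Real.Gamma (p+1) * Real.Gamma (q+1) / Real.Gamma (p+q+2)) := by
  have hsub := intervalIntegral.integral_comp_mul_add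
    (a := (0:ℝ)) (b := 1) (f := fun x => (1-x) ^ p * (1+x) ^ q) (two_ne_zero) (-1)
  norm_num at hsub
  -- hsub : ∫ t in 0..1, f (2t - 1) = 2⁻¹ * ∫ x in -1..1, f x  (roughly)
  have hcong : ∫ t in (0:ℝ)..1, (1-(2*t + -1)) ^ p * (2*t) ^ q
      = (2:ℝ) ^ p * (2:ℝ) ^ q * ∫ t in (0:ℝ)..1, t ^ q * (1-t) ^ p := by
    rw [← intervalIntegral.integral_const_mul]
    refine intervalIntegral.integral_congr fun t ht => ?_
    rw [Set.uIcc_of_le (by norm_num : (0:ℝ) ≤ 1)] at ht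
    have h1 : (1:ℝ) - (2*t + -1) = 2 * (1 - t) := by ring
    rw [h1, Real.mul_rpow (by norm_num) (by linarith [ht.2]),
      Real.mul_rpow (by norm_num) ht.1]
    ring
  rw [hcong] at hsub
  have hbeta := realBeta (q+1) (p+1) (by linarith) (by linarith)
  have e1 : q + 1 - 1 = q := by ring
  have e2 : p + 1 - 1 = p := by ring
  rw [e1, e2] at hbeta
  have e3 : q + 1 + (p + 1) = p + q + 2 := by ring
  rw [e3] at hbeta
  rw [hbeta] at hsub
  have h2 : (2:ℝ) ^ (p+q+1) = 2 ^ p * 2 ^ q * 2 := by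
    rw [show p + q + 1 = p + q + 1 from rfl, Real.rpow_add two_pos, Real.rpow_add two_pos,
      Real.rpow_one]
  rw [h2]
  linear_combination (-2:ℝ) * hsub

lemma cos_nat_pi (n : ℕ) : Real.cos (n * π) = (-1:ℝ)^n := by
  induction n with
  | zero => simp
  | succ n ih => push_cast; rw [add_mul, one_mul, Real.cos_add_pi, ih]; ring

set_option maxHeartbeats 2000000 in
theorem main_calc (lam : ℝ) (h1 : -1/2 < lam) (h2 : lam ≠ 0)
    (α : ℝ) (hα : 0 < α) (hαn : ∀ n : ℤ, α ≠ (n : ℝ)) (k : ℕ) :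
    gegCoeff lam (fun x => (1 + x) ^ α) k =
      (-1 : ℝ) ^ (k + 1) *
        ((2 : ℝ) ^ (2 * lam + α) * Real.sin (α * π) * Real.Gamma lam *
          Real.Gamma (α + lam + 1 / 2) * Real.Gamma (α + 1) * ((k : ℝ) + lam) *
          Real.Gamma ((k : ℝ) - α)) /
        (π ^ (3 / 2 : ℝ) * Real.Gamma ((k : ℝ) + α + 2 * lam + 1)) := by
  have hl12 : (0:ℝ) < lam + 1/2 := by linarith
  have hq1 : (-1:ℝ) < α + lam - 1/2 := by linarith
  -- the summand after simplification
  set g : ℕ → ℝ → ℝ := fun j x =>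
    ((poch (2*lam) k / (Nat.factorial k : ℝ)) *
      (poch (-(k:ℝ)) j * poch ((k:ℝ) + 2*lam) j /
        (poch (lam + 1/2) j * (Nat.factorial j : ℝ))) * (2:ℝ)⁻¹^j) *
    ((1-x) ^ (lam - 1/2 + (j:ℝ)) * (1+x) ^ (α + lam - 1/2)) with hg
  have hae1 : ∀ᵐ x : ℝ, x ≠ (1:ℝ) := by
    rw [MeasureTheory.ae_iff]
    have : {a : ℝ | ¬ a ≠ 1} = {1} := by ext y; simp
    rw [this]
    exact Real.volume_singleton
  have hEq : ∀ᵐ x : ℝ, x ∈ Set.uIoc (-1:ℝ) 1 →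
      gegWeight lam x * gegC lam k x * (1+x) ^ α
        = ∑ j ∈ Finset.range (k+1), g j x := by
    filter_upwards [hae1] with x hx1 hxI
    rw [Set.uIoc_of_le (by norm_num : (-1:ℝ) ≤ 1)] at hxI
    have hxl : (-1:ℝ) < x := hxI.1
    have hxu : x < 1 := lt_of_le_of_ne hxI.2 hx1
    have h1x : (0:ℝ) < 1 - x := by linarith
    have h1x' : (0:ℝ) < 1 + x := by linarith
    have hw : gegWeight lam x = (1-x) ^ (lam - 1/2) * (1+x) ^ (lam - 1/2) := by
      rw [gegWeight, show (1:ℝ) - x^2 = (1-x)*(1+x) by ring,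
        Real.mul_rpow h1x.le h1x'.le]
    rw [hw, gegC]
    simp only [Finset.mul_sum, Finset.sum_mul]
    refine Finset.sum_congr rfl fun j hj => ?_
    simp only [hg]
    have e1 : ((1-x)/2)^j = (1-x)^(j:ℝ) * (2:ℝ)⁻¹^j := by
      rw [div_pow, Real.rpow_natCast, inv_pow, div_eq_mul_inv]
    have e2 : (1-x) ^ (lam - 1/2 + (j:ℝ)) = (1-x) ^ (lam - 1/2) * (1-x)^(j:ℝ) :=
      Real.rpow_add h1x _ _
    have e3 : (1+x) ^ (α + lam - 1/2) = (1+x) ^ (lam - 1/2) * (1+x) ^ α := by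
      rw [← Real.rpow_add h1x']
      ring_nf
    rw [e1, e2, e3]
    ring
  have hInt : ∀ j ∈ Finset.range (k+1), IntervalIntegrable (g j) volume (-1) 1 := by
    intro j hj
    have := (betaIntegrable (lam - 1/2 + (j:ℝ)) (α + lam - 1/2)
      (by have : (0:ℝ) ≤ (j:ℝ) := Nat.cast_nonneg j; linarith) hq1).const_mul
      ((poch (2*lam) k / (Nat.factorial k : ℝ)) *
      (poch (-(k:ℝ)) j * poch ((k:ℝ) + 2*lam) j /
        (poch (lam + 1/2) j * (Nat.factorial j : ℝ))) * (2:ℝ)⁻¹^j)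
    simpa [hg] using this
  -- the integral
  have hIval : ∫ x in (-1:ℝ)..1, gegWeight lam x * gegC lam k x * (1+x) ^ α
      = ∑ j ∈ Finset.range (k+1), ∫ x in (-1:ℝ)..1, g j x := by
    rw [intervalIntegral.integral_congr_ae hEq,
      intervalIntegral.integral_finset_sum hInt]
  -- evaluate each integral and sum via Chu-Vandermonde
  have hΓa2l : (0:ℝ) < Real.Gamma (α + 2*lam + 1) :=
    Real.Gamma_pos_of_pos (by linarith)
  have hsum : ∑ j ∈ Finset.range (k+1), ∫ x in (-1:ℝ)..1, g j x
      = (poch (2*lam) k / (Nat.factorial k : ℝ)) * (2:ℝ)^(2*lam + α) *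
          Real.Gamma (lam + 1/2) * Real.Gamma (α + lam + 1/2) / Real.Gamma (α + 2*lam + 1) *
          (poch (α + 1 - (k:ℝ)) k / poch (α + 2*lam + 1) k) := by
    have hterm : ∀ j ∈ Finset.range (k+1), (∫ x in (-1:ℝ)..1, g j x)
        = ((poch (2*lam) k / (Nat.factorial k : ℝ)) * (2:ℝ)^(2*lam + α) *
            Real.Gamma (lam + 1/2) * Real.Gamma (α + lam + 1/2) / Real.Gamma (α + 2*lam + 1)) *
          ((-1:ℝ)^j * (k.choose j) * poch ((k:ℝ) + 2*lam) j / poch (α + 2*lam + 1) j) := by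
      intro j hj
      have hjk : j ≤ k := by simpa [Nat.lt_succ_iff] using hj
      have hpj : (-1:ℝ) < lam - 1/2 + (j:ℝ) := by
        have : (0:ℝ) ≤ (j:ℝ) := Nat.cast_nonneg j
        linarith
      rw [hg]
      simp only []
      rw [intervalIntegral.integral_const_mul, betaVal _ _ hpj hq1]
      have e1 : lam - 1/2 + (j:ℝ) + (α + lam - 1/2) + 1 = (2*lam + α) + (j:ℝ) := by ring
      have e2 : lam - 1/2 + (j:ℝ) + 1 = (lam + 1/2) + (j:ℝ) := by ring
      have e3 : α + lam - 1/2 + 1 = α + lam + 1/2 := by ring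
      have e4 : lam - 1/2 + (j:ℝ) + (α + lam - 1/2) + 2 = (α + 2*lam + 1) + (j:ℝ) := by ring
      rw [e1, e2, e3, e4, Real.rpow_add two_pos, Real.rpow_natCast,
        Gamma_poch (lam + 1/2) j (fun i _ => ne_of_gt (by
          have hi : (0:ℝ) ≤ (i:ℝ) := Nat.cast_nonneg i; linarith)),
        Gamma_poch (α + 2*lam + 1) j (fun i _ => ne_of_gt (by
          have hi : (0:ℝ) ≤ (i:ℝ) := Nat.cast_nonneg i; linarith)),
        poch_neg_nat k j hjk]
      rw [inv_pow]
      set F := (Nat.factorial j : ℝ) with hF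
      set P1 := poch (lam + 1/2) j with hP1
      set P2 := poch (α + 2*lam + 1) j with hP2
      set G3 := Real.Gamma (α + 2*lam + 1) with hG3
      set tw := (2:ℝ)^j with htw
      have hp1' : P1 ≠ 0 := (poch_pos hl12 j).ne'
      have hp2' : P2 ≠ 0 := (poch_pos (by linarith : (0:ℝ) < α + 2*lam + 1) j).ne'
      have hG3' : G3 ≠ 0 := hΓa2l.ne'
      have hf' : F ≠ 0 := by rw [hF]; positivity
      have htw' : tw ≠ 0 := by rw [htw]; positivity
      field_simp
    rw [Finset.sum_congr rfl hterm, ← Finset.mul_sum,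
      chu k ((k:ℝ) + 2*lam) (α + 2*lam + 1) (by linarith),
      show α + 2*lam + 1 - ((k:ℝ) + 2*lam) = α + 1 - (k:ℝ) by ring]
  -- now the Gamma gymnastics
  have hΓl12 : (0:ℝ) < Real.Gamma (lam + 1/2) := Real.Gamma_pos_of_pos hl12
  have hΓal : (0:ℝ) < Real.Gamma (α + lam + 1/2) := Real.Gamma_pos_of_pos (by linarith)
  have hΓa1 : (0:ℝ) < Real.Gamma (α + 1) := Real.Gamma_pos_of_pos (by linarith)
  have hΓka : (0:ℝ) < Real.Gamma ((k:ℝ) + α + 2*lam + 1) := by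
    apply Real.Gamma_pos_of_pos
    have : (0:ℝ) ≤ (k:ℝ) := Nat.cast_nonneg k
    linarith
  have hΓlam : Real.Gamma lam ≠ 0 := by
    apply Real.Gamma_ne_zero
    intro m
    rcases Nat.eq_zero_or_pos m with rfl | hm
    · simpa using h2
    · have : (1:ℝ) ≤ (m:ℝ) := by exact_mod_cast hm
      intro h; rw [h] at h1; linarith
  have hΓ2lam : Real.Gamma (2*lam) ≠ 0 := by
    apply Real.Gamma_ne_zero
    intro m
    rcases Nat.eq_zero_or_pos m with rfl | hm
    · simpa using (by intro h; exact h2 (by linarith) : ¬ 2*lam = -(0:ℝ))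
    · have : (1:ℝ) ≤ (m:ℝ) := by exact_mod_cast hm
      intro h; rw [show -(m:ℝ) = -(m:ℝ) from rfl] at h; nlinarith
  have hΓk2l : Real.Gamma ((k:ℝ) + 2*lam) ≠ 0 := by
    apply Real.Gamma_ne_zero
    intro m hcon
    rcases Nat.eq_zero_or_pos (k + m) with hkm | hkm
    · have hk0 : k = 0 := by omega
      have hm0 : m = 0 := by omega
      rw [hk0, hm0] at hcon
      norm_num at hcon
      exact h2 (by linarith)
    · have : (1:ℝ) ≤ (k:ℝ) + (m:ℝ) := by exact_mod_cast hkm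
      nlinarith [hcon]
  have hklam : (k:ℝ) + lam ≠ 0 := by
    rcases Nat.eq_zero_or_pos k with rfl | hk
    · simpa using h2
    · have : (1:ℝ) ≤ (k:ℝ) := by exact_mod_cast hk
      exact ne_of_gt (by linarith)
  have hfact : ((Nat.factorial k : ℕ) : ℝ) ≠ 0 := by positivity
  have hsin : Real.sin (α * π) ≠ 0 := by
    intro h
    obtain ⟨n, hn⟩ := Real.sin_eq_zero_iff.mp h
    exact hαn n (mul_right_cancel₀ Real.pi_ne_zero hn.symm)
  have hΓa1k : Real.Gamma (α + 1 - (k:ℝ)) ≠ 0 := by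
    apply Real.Gamma_ne_zero
    intro m h
    exact hαn ((k:ℤ) - 1 - (m:ℤ)) (by push_cast; linarith)
  -- poch-to-Gamma conversions
  have hA : poch (2*lam) k = Real.Gamma ((k:ℝ) + 2*lam) / Real.Gamma (2*lam) := by
    have := Gamma_poch (2*lam) k (fun i hi => ?_)
    · rw [show 2*lam + (k:ℝ) = (k:ℝ) + 2*lam by ring] at this
      field_simp [this]
      exact this.symm
    · rcases Nat.eq_zero_or_pos i with rfl | hi'
      · simpa using (by intro h; exact h2 (by linarith) : ¬ 2*lam = -(0:ℝ))
      · have : (1:ℝ) ≤ (i:ℝ) := by exact_mod_cast hi'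
        exact ne_of_gt (by linarith)
  have hB : poch (α + 2*lam + 1) k
      = Real.Gamma ((k:ℝ) + α + 2*lam + 1) / Real.Gamma (α + 2*lam + 1) := by
    have := Gamma_poch (α + 2*lam + 1) k (fun i _ => ne_of_gt (by
      have hi : (0:ℝ) ≤ (i:ℝ) := Nat.cast_nonneg i; linarith))
    rw [show α + 2*lam + 1 + (k:ℝ) = (k:ℝ) + α + 2*lam + 1 by ring] at this
    field_simp [this]
    exact this.symm
  have hC : poch (α + 1 - (k:ℝ)) k = Real.Gamma (α + 1) / Real.Gamma (α + 1 - (k:ℝ)) := by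
    have := Gamma_poch (α + 1 - (k:ℝ)) k (fun i hi => ?_)
    · rw [show α + 1 - (k:ℝ) + (k:ℝ) = α + 1 by ring] at this
      field_simp [this]
      exact this.symm
    · intro h
      exact hαn ((k:ℤ) - 1 - (i:ℤ)) (by push_cast; linarith)
  -- reflection formula
  have hrefl : Real.Gamma ((k:ℝ) - α) * Real.Gamma (α + 1 - (k:ℝ))
      * ((-1:ℝ)^(k+1) * Real.sin (α * π)) = π := by
    have h := Real.Gamma_mul_Gamma_one_sub ((k:ℝ) - α)
    rw [show (1:ℝ) - ((k:ℝ) - α) = α + 1 - (k:ℝ) by ring] at h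
    have hs : Real.sin (π * ((k:ℝ) - α)) = (-1:ℝ)^(k+1) * Real.sin (α * π) := by
      rw [show π * ((k:ℝ) - α) = (k:ℝ) * π - α * π by ring, Real.sin_sub,
        Real.sin_nat_mul_pi, cos_nat_pi]
      ring
    rw [hs] at h
    have hne : (-1:ℝ)^(k+1) * Real.sin (α * π) ≠ 0 := by
      apply mul_ne_zero _ hsin
      simp [pow_ne_zero]
    field_simp at h
    linarith [h]
  -- duplication formula
  have hdup : Real.Gamma lam * Real.Gamma (lam + 1/2)
      = Real.Gamma (2*lam) * (2:ℝ)^(1 - 2*lam) * Real.sqrt π := by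
    simpa using Real.Gamma_mul_Gamma_add_half lam
  have hGk1 : Real.Gamma ((k:ℝ) + 1) = (Nat.factorial k : ℝ) := Real.Gamma_nat_eq_factorial k
  have hpi32 : (π:ℝ) ^ ((3:ℝ)/2) = π * Real.sqrt π := by
    rw [show (3:ℝ)/2 = 1 + 1/2 by norm_num, Real.rpow_add pi_pos, Real.rpow_one,
      ← Real.sqrt_eq_rpow]
  -- assemble
  rw [gegCoeff, hIval, hsum, hA, hB, hC, gegNorm, hGk1]
  have hsπ : Real.sqrt π ≠ 0 := by positivity
  have hπ : (π:ℝ) ≠ 0 := pi_ne_zero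
  have h2p1 : ((2:ℝ)^(1 - 2*lam)) ≠ 0 := by positivity
  have hΓsub : Real.Gamma (lam + 1/2)
      = Real.Gamma (2*lam) * (2:ℝ)^(1 - 2*lam) * Real.sqrt π / Real.Gamma lam := by
    rw [eq_div_iff hΓlam]
    linear_combination hdup
  have hm1 : ((-1:ℝ)^(k+1)) ≠ 0 := by simp [pow_ne_zero]
  have hΓkarw : Real.Gamma ((k:ℝ) - α) ≠ 0 := by
    apply Real.Gamma_ne_zero
    intro m h
    exact hαn ((k:ℤ) + (m:ℤ)) (by push_cast; linarith)
  have hΓC : Real.Gamma (α + 1 - (k:ℝ))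
      = π / (Real.Gamma ((k:ℝ) - α) * ((-1:ℝ)^(k+1) * Real.sin (α * π))) := by
    have hne : Real.Gamma ((k:ℝ) - α) * ((-1:ℝ)^(k+1) * Real.sin (α * π)) ≠ 0 :=
      mul_ne_zero hΓkarw (mul_ne_zero hm1 hsin)
    rw [eq_div_iff hne]
    linear_combination hrefl
  rw [hΓsub, hΓC, show (3/2 : ℝ) = (3:ℝ)/2 by norm_num, hpi32]
  have hpisq : (π:ℝ) = Real.sqrt π * Real.sqrt π := (Real.mul_self_sqrt pi_pos.le).symm
  set s := Real.sin (α * π) with hs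
  set r := Real.sqrt π with hr
  set g1 := Real.Gamma lam with hg1
  set g2 := Real.Gamma (2*lam) with hg2
  set g3 := Real.Gamma ((k:ℝ) + 2*lam) with hg3
  set g4 := Real.Gamma (α + lam + 1/2) with hg4
  set g5 := Real.Gamma (α + 2*lam + 1) with hg5
  set g6 := Real.Gamma (α + 1) with hg6
  set g7 := Real.Gamma ((k:ℝ) - α) with hg7
  set g8 := Real.Gamma ((k:ℝ) + α + 2*lam + 1) with hg8
  set K := (Nat.factorial k : ℝ) with hK
  set m := ((-1:ℝ))^(k+1) with hm
  set t1 := (2:ℝ)^(1 - 2*lam) with ht1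
  set t2 := (2:ℝ)^(2*lam + α) with ht2
  set kl := (k:ℝ) + lam with hkl
  rw [hpisq]
  have hg5' : g5 ≠ 0 := hΓa2l.ne'
  have hg8' : g8 ≠ 0 := hΓka.ne'
  field_simp

/-- **Equation (6.1).** For `λ > −1/2`, `λ ≠ 0` and non-integer `α > 0`, the Gegenbauer
coefficients of `f_α(x) = (1+x)^α` are
`a_k^λ = (−1)^{k+1}·[2^{2λ+α}·sin(απ)·Γ(λ)·Γ(α+λ+1/2)·Γ(α+1)·(k+λ)·Γ(k−α)] /
[π^{3/2}·Γ(k+α+2λ+1)]` for all `k ≥ 0`. -/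
theorem gegCoeff_endpoint_singularity (lam : ℝ) (h1 : -1/2 < lam) (h2 : lam ≠ 0)
    (α : ℝ) (hα : 0 < α) (hαn : ∀ n : ℤ, α ≠ (n : ℝ)) :
    ∀ k : ℕ, gegCoeff lam (fun x => (1 + x) ^ α) k =
      (-1 : ℝ) ^ (k + 1) *
        ((2 : ℝ) ^ (2 * lam + α) * Real.sin (α * π) * Real.Gamma lam *
          Real.Gamma (α + lam + 1 / 2) * Real.Gamma (α + 1) * ((k : ℝ) + lam) *
          Real.Gamma ((k : ℝ) - α)) /
        (π ^ (3 / 2 : ℝ) * Real.Gamma ((k : ℝ) + α + 2 * lam + 1)) := by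
  intro k
  exact main_calc lam h1 h2 α hα hαn k
end
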